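/- arXiv:2101.12080 — 9 statements merged into one kernel-verified Lean document; each statement's English description precedes it below -/
import Mathlib

section
/- Every finite marriage market with strict preferences admits a stable matching (this is the content of the theorem that the Gale–Shapley deferred acceptance algorithm terminates and returns a valid and stable matching). -/
/-!
A marriage market: finite sets of men `M` and women `W`.  Man `m`'s strict
preference order on `W ∪ {m}` is modeled as a strict total order `prefM m` on
`Option W`, where `none` stands for the man `m` himself; likewise for women.
A matching is a pair of maps `μM : M → Option W`, `μW : W → Option M` that are
consistent.  Stability = individual rationality (nobody strictly prefers
themselves to their partner) + no blocking pair.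

STATEMENT: every finite marriage market with strict preferences admits a
stable matching (Gale–Shapley).
-/
open Classical Finset

section GSaux

/-- The most-preferred element of a nonempty finset, w.r.t. a strict total order `r`
(`r a b` meaning `a` is preferred to `b`). -/
noncomputable def gsBest {α : Type*} (r : α → α → Prop) (h : IsStrictTotalOrder α r)
    (s : Finset α) (hs : s.Nonempty) : α :=
  letI : DecidableRel r := fun _ _ => Classical.propDecidable _
  letI := linearOrderOfSTO r
  s.min' hs

theorem gsBest_mem {α : Type*} (r : α → α → Prop) (h : IsStrictTotalOrder α r)
    (s : Finset α) (hs : s.Nonempty) : gsBest r h s hs ∈ s := by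
  letI : DecidableRel r := fun _ _ => Classical.propDecidable _
  letI := linearOrderOfSTO r
  exact Finset.min'_mem s hs

theorem gsBest_le {α : Type*} (r : α → α → Prop) (h : IsStrictTotalOrder α r)
    (s : Finset α) (hs : s.Nonempty) {a : α} (ha : a ∈ s) :
    gsBest r h s hs = a ∨ r (gsBest r h s hs) a := by
  letI : DecidableRel r := fun _ _ => Classical.propDecidable _
  letI := linearOrderOfSTO r
  exact Finset.min'_le s a ha

end GSaux

theorem marriage_market_exists_stable_matching
    {M W : Type*} [Fintype M] [Fintype W]
    (prefM : M → Option W → Option W → Prop)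
    (prefW : W → Option M → Option M → Prop)
    (hM : ∀ m, IsStrictTotalOrder (Option W) (prefM m))
    (hW : ∀ w, IsStrictTotalOrder (Option M) (prefW w)) :
    ∃ (μM : M → Option W) (μW : W → Option M),
      -- valid matching
      (∀ m w, μM m = some w ↔ μW w = some m) ∧
      -- individual rationality
      (∀ m, ¬ prefM m none (μM m)) ∧
      (∀ w, ¬ prefW w none (μW w)) ∧
      -- no blocking pair
      ¬ ∃ (m : M) (w : W), prefM m (some w) (μM m) ∧ prefW w (some m) (μW w) := by
  classical
  -- State space
  set S := (M → Option W) × (W → Option M) with hS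
  -- candidate sets
  set A : M → (W → Option M) → Finset (Option W) := fun m y =>
    univ.filter fun o => o = none ∨ ∃ w, o = some w ∧ (some m = y w ∨ prefW w (some m) (y w))
    with hA
  set B : W → (M → Option W) → Finset (Option M) := fun w x =>
    univ.filter fun o => o = none ∨ ∃ m, o = some m ∧ (some w = x m ∨ prefM m (some w) (x m))
    with hB
  have hAne : ∀ m y, (A m y).Nonempty := fun m y => ⟨none, by simp [hA]⟩
  have hBne : ∀ w x, (B w x).Nonempty := fun w x => ⟨none, by simp [hB]⟩
  -- the Adachi operator
  set F : S → S := fun s =>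
    (fun m => gsBest (prefM m) (hM m) (A m s.2) (hAne m s.2),
     fun w => gsBest (prefW w) (hW w) (B w s.1) (hBne w s.1)) with hF
  -- preorder on states: men improve, women get worse
  set le : S → S → Prop := fun s t =>
    (∀ m, s.1 m = t.1 m ∨ prefM m (t.1 m) (s.1 m)) ∧
    (∀ w, s.2 w = t.2 w ∨ prefW w (s.2 w) (t.2 w)) with hle
  have letrans : ∀ {s t u : S}, le s t → le t u → le s u := by
    rintro s t u ⟨h1, h2⟩ ⟨h3, h4⟩
    constructor
    · intro m
      rcases h1 m with e | p
      · rw [e]; exact h3 m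
      · rcases h3 m with e | q
        · rw [← e]; exact Or.inr p
        · exact Or.inr ((hM m).trans _ _ _ q p)
    · intro w
      rcases h2 w with e | p
      · rw [e]; exact h4 w
      · rcases h4 w with e | q
        · rw [e] at p; exact Or.inr p
        · exact Or.inr ((hW w).trans _ _ _ p q)
  have antisymm : ∀ {s t : S}, le s t → le t s → s = t := by
    rintro s t ⟨h1, h2⟩ ⟨h3, h4⟩
    have e1 : s.1 = t.1 := by
      funext m
      rcases h1 m with e | p
      · exact e
      · rcases h3 m with e | q
        · exact e.symm
        · exact absurd ((hM m).trans _ _ _ p q) ((hM m).irrefl _)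
    have e2 : s.2 = t.2 := by
      funext w
      rcases h2 w with e | p
      · exact e
      · rcases h4 w with e | q
        · exact e.symm
        · exact absurd ((hW w).trans _ _ _ p q) ((hW w).irrefl _)
    exact Prod.ext e1 e2
  -- monotonicity of F
  have Fmono : ∀ {s t : S}, le s t → le (F s) (F t) := by
    rintro s t ⟨h1, h2⟩
    constructor
    · intro m
      -- A m s.2 ⊆ A m t.2
      have hsub : A m s.2 ⊆ A m t.2 := by
        intro o ho
        simp only [hA, mem_filter, mem_univ, true_and] at ho ⊢
        rcases ho with rfl | ⟨w, rfl, hc⟩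
        · exact Or.inl rfl
        · refine Or.inr ⟨w, rfl, ?_⟩
          rcases h2 w with e | p
          · rw [← e]; exact hc
          · rcases hc with e | q
            · rw [← e] at p; exact Or.inr p
            · exact Or.inr ((hW w).trans _ _ _ q p)
      -- best over superset is weakly better
      have hmem := gsBest_mem (prefM m) (hM m) (A m s.2) (hAne m s.2)
      exact (gsBest_le (prefM m) (hM m) (A m t.2) (hAne m t.2) (hsub hmem)).imp Eq.symm id
    · intro w
      have hsub : B w t.1 ⊆ B w s.1 := by
        intro o ho
        simp only [hB, mem_filter, mem_univ, true_and] at ho ⊢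
        rcases ho with rfl | ⟨m, rfl, hc⟩
        · exact Or.inl rfl
        · refine Or.inr ⟨m, rfl, ?_⟩
          rcases h1 m with e | p
          · rw [e]; exact hc
          · rcases hc with e | q
            · rw [e]; exact Or.inr p
            · exact Or.inr ((hM m).trans _ _ _ q p)
      have hmem := gsBest_mem (prefW w) (hW w) (B w t.1) (hBne w t.1)
      exact (gsBest_le (prefW w) (hW w) (B w s.1) (hBne w s.1) (hsub hmem))
  -- bottom state
  set bot : S := (fun m => gsBest (Function.swap (prefM m))
                    (letI := hM m; IsStrictTotalOrder.swap (prefM m)) univ univ_nonempty,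
                  fun w => gsBest (prefW w) (hW w) univ univ_nonempty) with hbot
  have hbotle : ∀ t : S, le bot t := by
    intro t
    constructor
    · intro m
      have := gsBest_le (Function.swap (prefM m))
        (letI := hM m; IsStrictTotalOrder.swap (prefM m)) univ univ_nonempty
        (mem_univ (t.1 m))
      exact this
    · intro w
      have := gsBest_le (prefW w) (hW w) univ univ_nonempty (mem_univ (t.2 w))
      exact this
  -- the iteration
  set a : ℕ → S := fun n => F^[n] bot with ha
  have hstep : ∀ n, le (a n) (a (n + 1)) := by
    intro n
    induction n with
    | zero => exact hbotle (a 1)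
    | succ k ih =>
      have : a (k + 1 + 1) = F (a (k + 1)) := by
        simp [ha, Function.iterate_succ_apply']
      have h2 : a (k + 1) = F (a k) := by
        simp [ha, Function.iterate_succ_apply']
      rw [this, h2]
      rw [h2] at ih
      exact Fmono (h2 ▸ ih)
  have hchain : ∀ i j, i ≤ j → le (a i) (a j) := by
    intro i j hij
    induction j with
    | zero =>
      cases Nat.le_zero.mp hij
      exact ⟨fun m => Or.inl rfl, fun w => Or.inl rfl⟩
    | succ k ih =>
      rcases Nat.lt_or_ge i (k + 1) with h | h
      · exact letrans (ih (Nat.lt_succ_iff.mp h)) (hstep k)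
      · have : i = k + 1 := le_antisymm hij h
        subst this
        exact ⟨fun m => Or.inl rfl, fun w => Or.inl rfl⟩
  -- finiteness: the chain stabilizes
  have : Finite S := by
    infer_instance
  obtain ⟨i, j, hij, heq⟩ := Finite.exists_ne_map_eq_of_infinite a
  wlog hlt : i < j generalizing i j
  · exact this j i hij.symm heq.symm ((hij.lt_or_gt).resolve_left hlt)
  have hfix : F (a i) = a i := by
    have h1 : le (a i) (a (i + 1)) := hstep i
    have h2 : le (a (i + 1)) (a j) := hchain _ _ hlt
    have h3 : a (i + 1) = a i := antisymm (heq ▸ h2) h1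
    calc F (a i) = a (i + 1) := by simp [ha, Function.iterate_succ_apply']
    _ = a i := h3
  -- the stable matching
  set x := (a i).1 with hx
  set y := (a i).2 with hy
  have hfx : ∀ m, x m = gsBest (prefM m) (hM m) (A m y) (hAne m y) := by
    intro m
    conv_lhs => rw [hx, ← hfix]
  have hfy : ∀ w, y w = gsBest (prefW w) (hW w) (B w x) (hBne w x) := by
    intro w
    conv_lhs => rw [hy, ← hfix]
  refine ⟨x, y, ?_, ?_, ?_, ?_⟩
  · -- valid matching
    intro m w
    constructor
    · intro hxm
      -- some w ∈ A m y, so some m = y w ∨ prefW w (some m) (y w)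
      have hmem : some w ∈ A m y := hxm ▸ (hfx m ▸ gsBest_mem (prefM m) (hM m) (A m y) (hAne m y))
      simp only [hA, mem_filter, mem_univ, true_and] at hmem
      rcases hmem with h | ⟨w', hw', hc⟩
      · exact absurd h (by simp)
      · injection hw' with h
        subst h
        -- m ∈ B w x
        have hmB : some m ∈ B w x := by
          simp only [hB, mem_filter, mem_univ, true_and]
          exact Or.inr ⟨m, rfl, Or.inl hxm.symm⟩
        have := gsBest_le (prefW w) (hW w) (B w x) (hBne w x) hmB
        rw [← hfy w] at this
        rcases this with e | p
        · exact e
        · rcases hc with e | q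
          · exact e.symm
          · exact absurd ((hW w).trans _ _ _ p q) ((hW w).irrefl _)
    · intro hyw
      have hmem : some m ∈ B w x := hyw ▸ (hfy w ▸ gsBest_mem (prefW w) (hW w) (B w x) (hBne w x))
      simp only [hB, mem_filter, mem_univ, true_and] at hmem
      rcases hmem with h | ⟨m', hm', hc⟩
      · exact absurd h (by simp)
      · injection hm' with h
        subst h
        have hmA : some w ∈ A m y := by
          simp only [hA, mem_filter, mem_univ, true_and]
          exact Or.inr ⟨w, rfl, Or.inl hyw.symm⟩
        have := gsBest_le (prefM m) (hM m) (A m y) (hAne m y) hmA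
        rw [← hfx m] at this
        rcases this with e | p
        · exact e
        · rcases hc with e | q
          · exact e.symm
          · exact absurd ((hM m).trans _ _ _ p q) ((hM m).irrefl _)
  · -- men's individual rationality
    intro m hcon
    have hnA : (none : Option W) ∈ A m y := by simp [hA]
    have := gsBest_le (prefM m) (hM m) (A m y) (hAne m y) hnA
    rw [← hfx m] at this
    rcases this with e | p
    · rw [e] at hcon; exact (hM m).irrefl _ hcon
    · exact (hM m).irrefl _ ((hM m).trans _ _ _ hcon p)
  · -- women's individual rationality
    intro w hcon
    have hnB : (none : Option M) ∈ B w x := by simp [hB]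
    have := gsBest_le (prefW w) (hW w) (B w x) (hBne w x) hnB
    rw [← hfy w] at this
    rcases this with e | p
    · rw [e] at hcon; exact (hW w).irrefl _ hcon
    · exact (hW w).irrefl _ ((hW w).trans _ _ _ hcon p)
  · -- no blocking pair
    rintro ⟨m, w, hm, hw⟩
    have hmA : some w ∈ A m y := by
      simp only [hA, mem_filter, mem_univ, true_and]
      exact Or.inr ⟨w, rfl, Or.inr hw⟩
    have := gsBest_le (prefM m) (hM m) (A m y) (hAne m y) hmA
    rw [← hfx m] at this
    rcases this with e | p
    · rw [e] at hm; exact (hM m).irrefl _ hm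
    · exact (hM m).irrefl _ ((hM m).trans _ _ _ hm p)
end

section
/- Every finite marriage market with weak preferences (total preorders, ties allowed) admits a stable matching, where blocking pairs are defined using the strict parts of the preference orders. -/
/-- A finite nonempty set (given by a predicate with a witness) under a total
transitive relation has a maximum element. -/
theorem exists_rel_max {α : Type*} [Fintype α] (r : α → α → Prop)
    (htot : ∀ a b, r a b ∨ r b a) (htr : ∀ a b c, r a b → r b c → r a c)
    (p : α → Prop) (a0 : α) (ha0 : p a0) :
    ∃ a, p a ∧ ∀ b, p b → r a b := by
  classical
  have key : ∀ s : Finset α, s.Nonempty → ∃ a ∈ s, ∀ b ∈ s, r a b := by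
    intro s
    induction s using Finset.cons_induction with
    | empty => intro h; simp at h
    | cons a s ha ih =>
      intro _
      rcases s.eq_empty_or_nonempty with rfl | hs
      · exact ⟨a, by simp, by simpa using (htot _ _).elim id id⟩
      · obtain ⟨b, hb, hbmax⟩ := ih hs
        rcases htot a b with h1 | h1
        · refine ⟨a, Finset.mem_cons_self a s, fun c hc => ?_⟩
          rcases Finset.mem_cons.1 hc with rfl | hc
          · exact (htot _ _).elim id id
          · exact htr _ b c h1 (hbmax c hc)
        · refine ⟨b, Finset.mem_cons_of_mem hb, fun c hc => ?_⟩
          rcases Finset.mem_cons.1 hc with rfl | hc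
          · exact h1
          · exact hbmax c hc
  obtain ⟨a, has, hmax⟩ := key (Finset.univ.filter p)
    ⟨a0, Finset.mem_filter.2 ⟨Finset.mem_univ _, ha0⟩⟩
  exact ⟨a, (Finset.mem_filter.1 has).2,
    fun b hb => hmax b (Finset.mem_filter.2 ⟨Finset.mem_univ _, hb⟩)⟩

/-- Stable matchings exist when preferences are total orders (antisymmetric). -/
theorem strict_marriage_market_exists_stable_matching
    {M W : Type*} [Fintype M] [Fintype W]
    (geM : M → Option W → Option W → Prop)
    (geW : W → Option M → Option M → Prop)
    (hMtrans : ∀ m a b c, geM m a b → geM m b c → geM m a c)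
    (hMtotal : ∀ m a b, geM m a b ∨ geM m b a)
    (hManti : ∀ m a b, geM m a b → geM m b a → a = b)
    (hWtrans : ∀ w a b c, geW w a b → geW w b c → geW w a c)
    (hWtotal : ∀ w a b, geW w a b ∨ geW w b a)
    (hWanti : ∀ w a b, geW w a b → geW w b a → a = b) :
    ∃ (μM : M → Option W) (μW : W → Option M),
      (∀ m w, μM m = some w ↔ μW w = some m) ∧
      (∀ m, ¬ (geM m none (μM m) ∧ ¬ geM m (μM m) none)) ∧
      (∀ w, ¬ (geW w none (μW w) ∧ ¬ geW w (μW w) none)) ∧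
      ¬ ∃ (m : M) (w : W),
          (geM m (some w) (μM m) ∧ ¬ geM m (μM m) (some w)) ∧
          (geW w (some m) (μW w) ∧ ¬ geW w (μW w) (some m)) := by
  classical
  have hMrefl : ∀ m a, geM m a a := fun m a => (hMtotal m a a).elim id id
  have hWrefl : ∀ w a, geW w a a := fun w a => (hWtotal w a a).elim id id
  -- best achievable partner for each man given women's current tentative choices
  have hx : ∀ (y : W → Option M) (m : M), ∃ o : Option W,
      (o = none ∨ ∃ w, o = some w ∧ geW w (some m) (y w)) ∧
      ∀ o', (o' = none ∨ ∃ w, o' = some w ∧ geW w (some m) (y w)) → geM m o o' := by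
    intro y m
    obtain ⟨a, hp, hmax⟩ := exists_rel_max (geM m) (hMtotal m) (hMtrans m)
      (fun o => o = none ∨ ∃ w, o = some w ∧ geW w (some m) (y w)) none (Or.inl rfl)
    exact ⟨a, hp, hmax⟩
  choose xhat hxmem hxmax using hx
  have hy : ∀ (x : M → Option W) (w : W), ∃ o : Option M,
      (o = none ∨ ∃ m, o = some m ∧ geM m (some w) (x m)) ∧
      ∀ o', (o' = none ∨ ∃ m, o' = some m ∧ geM m (some w) (x m)) → geW w o o' := by
    intro x w
    obtain ⟨a, hp, hmax⟩ := exists_rel_max (geW w) (hWtotal w) (hWtrans w)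
      (fun o => o = none ∨ ∃ m, o = some m ∧ geM m (some w) (x m)) none (Or.inl rfl)
    exact ⟨a, hp, hmax⟩
  choose yhat hymem hymax using hy
  -- global bottom for men, global top for women
  have hbot : ∀ m, ∃ o : Option W, ∀ o', geM m o' o := by
    intro m
    obtain ⟨a, _, hmax⟩ := exists_rel_max (fun a b => geM m b a) (fun a b => (hMtotal m b a))
      (fun a b c hab hbc => hMtrans m c b a hbc hab) (fun _ => True) none trivial
    exact ⟨a, fun o' => hmax o' trivial⟩
  choose x0 hx0 using hbot
  have htop : ∀ w, ∃ o : Option M, ∀ o', geW w o o' := by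
    intro w
    obtain ⟨a, _, hmax⟩ := exists_rel_max (geW w) (hWtotal w) (hWtrans w)
      (fun _ => True) none trivial
    exact ⟨a, fun o' => hmax o' trivial⟩
  choose y0 hy0 using htop
  -- the monotone operator
  set T : (M → Option W) × (W → Option M) → (M → Option W) × (W → Option M) :=
    fun p => (fun m => xhat p.2 m, fun w => yhat p.1 w) with hT
  -- the order (men improve, women get worse)
  set le : (M → Option W) × (W → Option M) → (M → Option W) × (W → Option M) → Prop :=
    fun p q => (∀ m, geM m (q.1 m) (p.1 m)) ∧ (∀ w, geW w (p.2 w) (q.2 w)) with hle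
  have mono : ∀ p q, le p q → le (T p) (T q) := by
    rintro p q ⟨hm, hw⟩
    constructor
    · intro m
      apply hxmax q.2 m
      rcases hxmem p.2 m with h | ⟨w, hw', hge⟩
      · exact Or.inl h
      · exact Or.inr ⟨w, hw', hWtrans w _ _ _ hge (hw w)⟩
    · intro w
      apply hymax p.1 w
      rcases hymem q.1 w with h | ⟨m, hm', hge⟩
      · exact Or.inl h
      · exact Or.inr ⟨m, hm', hMtrans m _ _ _ hge (hm m)⟩
  have letrans : ∀ p q r, le p q → le q r → le p r := by
    rintro p q r ⟨h1, h2⟩ ⟨h3, h4⟩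
    exact ⟨fun m => hMtrans m _ _ _ (h3 m) (h1 m), fun w => hWtrans w _ _ _ (h2 w) (h4 w)⟩
  have leanti : ∀ p q, le p q → le q p → p = q := by
    rintro p q ⟨h1, h2⟩ ⟨h3, h4⟩
    exact Prod.ext (funext fun m => hManti m _ _ (h3 m) (h1 m))
      (funext fun w => hWanti w _ _ (h2 w) (h4 w))
  set s : ℕ → (M → Option W) × (W → Option M) := fun n => T^[n] (x0, y0) with hs
  have step : ∀ n, le (s n) (s (n + 1)) := by
    intro n
    induction n with
    | zero =>
      simp only [hs, Function.iterate_one, Function.iterate_zero, id]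
      exact ⟨fun m => hx0 m _, fun w => hy0 w _⟩
    | succ n ih =>
      have e1 : s (n + 1) = T (s n) := by
        simp only [hs, Function.iterate_succ_apply']
      have e2 : s (n + 2) = T (s (n + 1)) := by
        simp only [hs, Function.iterate_succ_apply']
      rw [e1, e2]
      exact mono _ _ ih
  have chain : ∀ n k, le (s n) (s (n + k)) := by
    intro n k
    induction k with
    | zero => exact ⟨fun m => hMrefl m _, fun w => hWrefl w _⟩
    | succ k ih => exact letrans _ _ _ ih (step (n + k))
  -- find a fixed point by pigeonhole
  obtain ⟨i, j, hne, heq⟩ := Finite.exists_ne_map_eq_of_infinite s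
  have hfix : ∃ p, T p = p := by
    rcases hne.lt_or_gt with hij | hij
    · refine ⟨s i, ?_⟩
      have h1 : le (s (i + 1)) (s j) := by
        obtain ⟨k, rfl⟩ := Nat.exists_eq_add_of_le (Nat.succ_le_of_lt hij)
        exact chain (i + 1) k
      rw [← heq] at h1
      have : s (i + 1) = s i := leanti _ _ h1 (step i)
      calc T (s i) = s (i + 1) := by simp only [hs, Function.iterate_succ_apply']
        _ = s i := this
    · refine ⟨s j, ?_⟩
      have h1 : le (s (j + 1)) (s i) := by
        obtain ⟨k, rfl⟩ := Nat.exists_eq_add_of_le (Nat.succ_le_of_lt hij)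
        exact chain (j + 1) k
      rw [heq] at h1
      have : s (j + 1) = s j := leanti _ _ h1 (step j)
      calc T (s j) = s (j + 1) := by simp only [hs, Function.iterate_succ_apply']
        _ = s j := this
  obtain ⟨p, hp⟩ := hfix
  have hfx : ∀ m, xhat p.2 m = p.1 m := fun m => congrFun (congrArg Prod.fst hp) m
  have hfy : ∀ w, yhat p.1 w = p.2 w := fun w => congrFun (congrArg Prod.snd hp) w
  refine ⟨p.1, p.2, ?_, ?_, ?_, ?_⟩
  · -- valid matching
    intro m w
    constructor
    · intro h
      -- woman w weakly accepts m
      have hacc : geW w (some m) (p.2 w) := by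
        rcases hxmem p.2 m with h' | ⟨w', hw', hge⟩
        · rw [hfx m, h] at h'; exact absurd h' (by simp)
        · rw [hfx m, h] at hw'
          obtain rfl : w = w' := by injection hw'
          exact hge
      have hmem : geW w (p.2 w) (some m) := by
        rw [← hfy w]
        exact hymax p.1 w (some m) (Or.inr ⟨m, rfl, by rw [h]; exact hMrefl m _⟩)
      exact (hWanti w _ _ hmem hacc).symm ▸ rfl
    · intro h
      have hacc : geM m (some w) (p.1 m) := by
        rcases hymem p.1 w with h' | ⟨m', hm', hge⟩
        · rw [hfy w, h] at h'; exact absurd h' (by simp)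
        · rw [hfy w, h] at hm'
          obtain rfl : m = m' := by injection hm'
          exact hge
      have hmem : geM m (p.1 m) (some w) := by
        rw [← hfx m]
        exact hxmax p.2 m (some w) (Or.inr ⟨w, rfl, by rw [h]; exact hWrefl w _⟩)
      exact (hManti m _ _ hmem hacc).symm ▸ rfl
  · -- men's individual rationality
    rintro m ⟨_, h2⟩
    exact h2 (by rw [← hfx m]; exact hxmax p.2 m none (Or.inl rfl))
  · -- women's individual rationality
    rintro w ⟨_, h2⟩
    exact h2 (by rw [← hfy w]; exact hymax p.1 w none (Or.inl rfl))
  · -- no blocking pair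
    rintro ⟨m, w, ⟨_, h2⟩, ⟨h3, _⟩⟩
    exact h2 (by rw [← hfx m]; exact hxmax p.2 m (some w) (Or.inr ⟨w, rfl, h3⟩))

theorem weak_marriage_market_exists_stable_matching
    {M W : Type*} [Fintype M] [Fintype W]
    (geM : M → Option W → Option W → Prop)
    (geW : W → Option M → Option M → Prop)
    (hMtrans : ∀ m a b c, geM m a b → geM m b c → geM m a c)
    (hMtotal : ∀ m a b, geM m a b ∨ geM m b a)
    (hWtrans : ∀ w a b c, geW w a b → geW w b c → geW w a c)
    (hWtotal : ∀ w a b, geW w a b ∨ geW w b a) :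
    ∃ (μM : M → Option W) (μW : W → Option M),
      -- valid matching
      (∀ m w, μM m = some w ↔ μW w = some m) ∧
      -- individual rationality (via strict parts)
      (∀ m, ¬ (geM m none (μM m) ∧ ¬ geM m (μM m) none)) ∧
      (∀ w, ¬ (geW w none (μW w) ∧ ¬ geW w (μW w) none)) ∧
      -- no blocking pair (via strict parts)
      ¬ ∃ (m : M) (w : W),
          (geM m (some w) (μM m) ∧ ¬ geM m (μM m) (some w)) ∧
          (geW w (some m) (μW w) ∧ ¬ geW w (μW w) (some m)) := by
  classical
  -- tie-break the weak preferences into total orders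
  obtain ⟨fW, hfW⟩ := Countable.exists_injective_nat (Option W)
  obtain ⟨fM, hfM⟩ := Countable.exists_injective_nat (Option M)
  set geM' : M → Option W → Option W → Prop :=
    fun m a b => geM m a b ∧ (geM m b a → fW a ≤ fW b) with hgeM'
  set geW' : W → Option M → Option M → Prop :=
    fun w a b => geW w a b ∧ (geW w b a → fM a ≤ fM b) with hgeW'
  obtain ⟨μM, μW, hmatch, hirM, hirW, hblock⟩ :=
    strict_marriage_market_exists_stable_matching geM' geW'
      (by
        rintro m a b c ⟨h1, h1'⟩ ⟨h2, h2'⟩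
        refine ⟨hMtrans m a b c h1 h2, fun hca => ?_⟩
        exact le_trans (h1' (hMtrans m b c a h2 hca)) (h2' (hMtrans m c a b hca h1)))
      (by
        intro m a b
        by_cases hab : geM m a b <;> by_cases hba : geM m b a
        · rcases le_total (fW a) (fW b) with h | h
          · exact Or.inl ⟨hab, fun _ => h⟩
          · exact Or.inr ⟨hba, fun _ => h⟩
        · exact Or.inl ⟨hab, fun h => absurd h hba⟩
        · exact Or.inr ⟨hba, fun h => absurd h hab⟩
        · exact absurd (hMtotal m a b) (by tauto))
      (by
        rintro m a b ⟨h1, h1'⟩ ⟨h2, h2'⟩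
        exact hfW (le_antisymm (h1' h2) (h2' h1)))
      (by
        rintro w a b c ⟨h1, h1'⟩ ⟨h2, h2'⟩
        refine ⟨hWtrans w a b c h1 h2, fun hca => ?_⟩
        exact le_trans (h1' (hWtrans w b c a h2 hca)) (h2' (hWtrans w c a b hca h1)))
      (by
        intro w a b
        by_cases hab : geW w a b <;> by_cases hba : geW w b a
        · rcases le_total (fM a) (fM b) with h | h
          · exact Or.inl ⟨hab, fun _ => h⟩
          · exact Or.inr ⟨hba, fun _ => h⟩
        · exact Or.inl ⟨hab, fun h => absurd h hba⟩
        · exact Or.inr ⟨hba, fun h => absurd h hab⟩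
        · exact absurd (hWtotal w a b) (by tauto))
      (by
        rintro w a b ⟨h1, h1'⟩ ⟨h2, h2'⟩
        exact hfM (le_antisymm (h1' h2) (h2' h1)))
  refine ⟨μM, μW, hmatch, ?_, ?_, ?_⟩
  · rintro m ⟨h1, h2⟩
    exact hirM m ⟨⟨h1, fun h => absurd h h2⟩, fun h => h2 h.1⟩
  · rintro w ⟨h1, h2⟩
    exact hirW w ⟨⟨h1, fun h => absurd h h2⟩, fun h => h2 h.1⟩
  · rintro ⟨m, w, ⟨h1, h2⟩, ⟨h3, h4⟩⟩
    exact hblock ⟨m, w,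
      ⟨⟨h1, fun h => absurd h h2⟩, fun h => h2 h.1⟩,
      ⟨⟨h3, fun h => absurd h h4⟩, fun h => h4 h.1⟩⟩
end

section
/- In every finite marriage market with strict preferences there exists a man-optimal stable matching: a stable matching μ such that for every stable matching μ' and every man m, μ(m) ≥_m μ'(m). Moreover, such a man-optimal stable matching is unique. -/
/-- A matching on a marriage market: `none` stands for being matched to
oneself. -/
def IsMarriageMatching {M W : Type*}
    (μM : M → Option W) (μW : W → Option M) : Prop :=
  ∀ m w, μM m = some w ↔ μW w = some m

/-- Stability of a matching: it is a valid matching, individually rational,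
and admits no blocking pair.  `prefM m`/`prefW w` are the strict preference
orders of man `m` over `Option W` and of woman `w` over `Option M`
(`none` = the person themself). -/
def IsStableMarriageMatching {M W : Type*}
    (prefM : M → Option W → Option W → Prop)
    (prefW : W → Option M → Option M → Prop)
    (μM : M → Option W) (μW : W → Option M) : Prop :=
  IsMarriageMatching μM μW ∧
  (∀ m, ¬ prefM m none (μM m)) ∧
  (∀ w, ¬ prefW w none (μW w)) ∧
  ¬ ∃ (m : M) (w : W), prefM m (some w) (μM m) ∧ prefW w (some m) (μW w)

/-! Men-proposing deferred acceptance, run on the set `R` of pairs `(m, w)` in which `w` has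
already rejected `m`: each man proposes to his favourite woman who has not rejected him, each
woman holds her favourite proposer, and a round rejects every proposer who is not held.
Two invariants survive a round: a rejected man is worse, for the woman who rejected him, than
the man she holds (women only trade up); and no rejected pair is matched in any stable matching.
A maximal set of rejections with both properties is therefore a fixed point of the round, and
there proposals and holds form a stable matching in which every man gets his favourite woman
among those not ruled out, hence one at least as good as in any stable matching.
Uniqueness: two man-optimal matchings agree on the men by asymmetry of preferences, and the
men's side of a matching determines the women's. -/

section StrictOrder

variable {α : Type*} {r : α → α → Prop} {a b : α}

theorem eq_or_rel_of_not_rel [Std.Trichotomous r] (h : ¬ r b a) : a = b ∨ r a b :=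
  (trichotomous_of r a b).elim Or.inr fun h' => h'.imp id fun h'' => absurd h'' h

theorem not_rel_of_eq_or_rel [Std.Asymm r] (h : a = b ∨ r a b) : ¬ r b a := by
  rcases h with rfl | h
  exacts [irrefl_of r a, asymm_of r h]

theorem eq_of_eq_or_rel_of_eq_or_rel [Std.Asymm r] (hab : a = b ∨ r a b)
    (hba : b = a ∨ r b a) : a = b :=
  hab.resolve_right (not_rel_of_eq_or_rel hba)

end StrictOrder

section Best

variable {α : Type*} (r : α → α → Prop) [IsStrictTotalOrder α r] [Finite α]

/-- The most preferred element of `s`, reading `r a b` as "`a` is preferred to `b`". -/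
noncomputable def best (s : Set α) (hs : s.Nonempty) : α :=
  (Finite.wellFounded_of_trans_of_irrefl r).min s hs

variable {r} {s t : Set α} (hs : s.Nonempty) {a : α}

theorem best_mem : best r s hs ∈ s :=
  WellFounded.min_mem _ _ _

theorem not_rel_best (ha : a ∈ s) : ¬ r a (best r s hs) :=
  WellFounded.not_lt_min _ _ ha

theorem best_eq_or_rel (ha : a ∈ s) : best r s hs = a ∨ r (best r s hs) a :=
  eq_or_rel_of_not_rel (not_rel_best hs ha)

theorem best_eq_best_of_subset (ht : t.Nonempty) (hts : t ⊆ s) (h : best r s hs ∈ t) :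
    best r t ht = best r s hs :=
  eq_of_eq_or_rel_of_eq_or_rel (best_eq_or_rel ht h) (best_eq_or_rel hs (hts (best_mem ht)))

end Best

theorem IsMarriageMatching.right_unique {M W : Type*} {μM : M → Option W} {μW νW : W → Option M}
    (hμ : IsMarriageMatching μM μW) (hν : IsMarriageMatching μM νW) : μW = νW :=
  funext fun w => Option.ext fun m => (hμ m w).symm.trans (hν m w)

def IsManOptimalStableMatching {M W : Type*}
    (prefM : M → Option W → Option W → Prop) (prefW : W → Option M → Option M → Prop)
    (μM : M → Option W) (μW : W → Option M) : Prop :=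
  IsStableMarriageMatching prefM prefW μM μW ∧
    ∀ (νM : M → Option W) (νW : W → Option M),
      IsStableMarriageMatching prefM prefW νM νW → ∀ m, μM m = νM m ∨ prefM m (μM m) (νM m)

theorem IsManOptimalStableMatching.eq {M W : Type*}
    {prefM : M → Option W → Option W → Prop} {prefW : W → Option M → Option M → Prop}
    [∀ m, Std.Asymm (prefM m)] {μM νM : M → Option W} {μW νW : W → Option M}
    (hμ : IsManOptimalStableMatching prefM prefW μM μW)
    (hν : IsManOptimalStableMatching prefM prefW νM νW) : νM = μM ∧ νW = μW := by
  have hM : νM = μM :=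
    funext fun m => eq_of_eq_or_rel_of_eq_or_rel (hν.2 _ _ hμ.1 m) (hμ.2 _ _ hν.1 m)
  subst hM
  exact ⟨rfl, hν.1.1.right_unique hμ.1.1⟩

namespace DeferredAcceptance

variable {M W : Type*}

def available (R : Set (M × W)) (m : M) : Set (Option W) :=
  {o | ∀ w, o = some w → (m, w) ∉ R}

theorem none_mem_available (R : Set (M × W)) (m : M) : none ∈ available R m :=
  fun _ h => nomatch h

theorem some_mem_available {R : Set (M × W)} {m : M} {w : W} :
    some w ∈ available R m ↔ (m, w) ∉ R :=
  ⟨fun h => h w rfl, fun h _ hw => Option.some_inj.1 hw ▸ h⟩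

theorem available_anti {R R' : Set (M × W)} (h : R ⊆ R') (m : M) :
    available R' m ⊆ available R m :=
  fun _ ho w hw hR => ho w hw (h hR)

section Proposals

variable [Finite W] (prefM : M → Option W → Option W → Prop)
  [∀ m, IsStrictTotalOrder (Option W) (prefM m)]

noncomputable def propose (R : Set (M × W)) (m : M) : Option W :=
  best (prefM m) (available R m) ⟨none, none_mem_available R m⟩

def suitors (R : Set (M × W)) (w : W) : Set (Option M) :=
  {o | ∀ m, o = some m → propose prefM R m = some w}

theorem none_mem_suitors (R : Set (M × W)) (w : W) : none ∈ suitors prefM R w :=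
  fun _ h => nomatch h

variable {prefM} {R : Set (M × W)} {m : M} {w : W}

theorem some_mem_suitors : some m ∈ suitors prefM R w ↔ propose prefM R m = some w :=
  ⟨fun h => h m rfl, fun h _ hm => Option.some_inj.1 hm ▸ h⟩

theorem not_mem_of_propose_eq (h : propose prefM R m = some w) : (m, w) ∉ R :=
  some_mem_available.1 (h ▸ best_mem _)

theorem propose_eq_or_rel {νM : M → Option W} (hR : ∀ m w, (m, w) ∈ R → νM m ≠ some w) (m : M) :
    propose prefM R m = νM m ∨ prefM m (propose prefM R m) (νM m) :=
  best_eq_or_rel _ fun w h hmw => hR m w hmw h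

end Proposals

variable [Finite M] [Finite W]
  (prefM : M → Option W → Option W → Prop) (prefW : W → Option M → Option M → Prop)
  [∀ m, IsStrictTotalOrder (Option W) (prefM m)] [∀ w, IsStrictTotalOrder (Option M) (prefW w)]

noncomputable def hold (R : Set (M × W)) (w : W) : Option M :=
  best (prefW w) (suitors prefM R w) ⟨none, none_mem_suitors prefM R w⟩

def rejectStep (R : Set (M × W)) : Set (M × W) :=
  R ∪ {p | propose prefM R p.1 = some p.2 ∧ hold prefM prefW R p.2 ≠ some p.1}

def RejectionsJustified (R : Set (M × W)) : Prop :=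
  ∀ m w, (m, w) ∈ R → prefW w (hold prefM prefW R w) (some m)

def AvoidsStablePairs (R : Set (M × W)) : Prop :=
  ∀ (νM : M → Option W) (νW : W → Option M), IsStableMarriageMatching prefM prefW νM νW →
    ∀ m w, (m, w) ∈ R → νM m ≠ some w

variable {prefM prefW} {R : Set (M × W)} {m : M} {w : W}

theorem propose_eq_of_hold_eq (h : hold prefM prefW R w = some m) : propose prefM R m = some w :=
  some_mem_suitors.1 (h ▸ best_mem _)

theorem rel_hold_of_propose_eq (h : propose prefM R m = some w)
    (hne : hold prefM prefW R w ≠ some m) : prefW w (hold prefM prefW R w) (some m) :=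
  (best_eq_or_rel _ (some_mem_suitors.2 h)).resolve_left hne

theorem propose_rejectStep (h : hold prefM prefW R w = some m) :
    propose prefM (rejectStep prefM prefW R) m = some w := by
  have hp := propose_eq_of_hold_eq h
  have hw : propose prefM R m ∈ available (rejectStep prefM prefW R) m := by
    rw [hp, some_mem_available]
    rintro (hR | ⟨-, hne⟩)
    exacts [not_mem_of_propose_eq hp hR, hne h]
  rw [← hp]
  exact best_eq_best_of_subset _ _ (available_anti Set.subset_union_left m) hw

theorem not_rel_hold_rejectStep (w : W) :
    ¬ prefW w (hold prefM prefW R w) (hold prefM prefW (rejectStep prefM prefW R) w) := by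
  cases h : hold prefM prefW R w with
  | none => exact not_rel_best _ (none_mem_suitors prefM _ w)
  | some m => exact not_rel_best _ (some_mem_suitors.2 (propose_rejectStep h))

theorem RejectionsJustified.rejectStep (hR : RejectionsJustified prefM prefW R) :
    RejectionsJustified prefM prefW (rejectStep prefM prefW R) := by
  intro m w hmw
  have hold_rel : prefW w (hold prefM prefW R w) (some m) := by
    rcases hmw with hmw | ⟨hp, hne⟩
    exacts [hR m w hmw, rel_hold_of_propose_eq hp hne]
  exact trans_trichotomous_left (not_rel_hold_rejectStep w) hold_rel

/-- A woman rejects `m` only in favour of a man she prefers who proposes to her; were `m` her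
stable partner, that man would block the stable matching. -/
theorem AvoidsStablePairs.rejectStep (hR : AvoidsStablePairs prefM prefW R) :
    AvoidsStablePairs prefM prefW (rejectStep prefM prefW R) := by
  rintro νM νW hν m w (hmw | ⟨hp, hne⟩) hνm
  · exact hR νM νW hν m w hmw hνm
  have hνw : νW w = some m := (hν.1 m w).1 hνm
  have hrel := rel_hold_of_propose_eq hp hne
  cases hh : hold prefM prefW R w with
  | none => exact hν.2.2.1 w (hνw ▸ hh ▸ hrel)
  | some m' =>
    have hν' : νM m' ≠ some w := fun h => hne (hh.trans (((hν.1 m' w).1 h).symm.trans hνw))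
    have hprop : prefM m' (some w) (νM m') := by
      have hp' := propose_eq_of_hold_eq hh
      exact hp' ▸ (propose_eq_or_rel (hR νM νW hν) m').resolve_left (hp'.trans_ne hν'.symm)
    exact hν.2.2.2 ⟨m', w, hprop, hνw ▸ hh ▸ hrel⟩

theorem isStableMarriageMatching_of_rejectStep_eq (hR : RejectionsJustified prefM prefW R)
    (hfix : rejectStep prefM prefW R = R) :
    IsStableMarriageMatching prefM prefW (propose prefM R) (hold prefM prefW R) := by
  refine ⟨fun m w => ⟨fun hp => ?_, propose_eq_of_hold_eq⟩,
    fun m => not_rel_best _ (none_mem_available R m),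
    fun w => not_rel_best _ (none_mem_suitors prefM R w), ?_⟩
  · by_contra hne
    exact not_mem_of_propose_eq hp (hfix ▸ Or.inr ⟨hp, hne⟩)
  · rintro ⟨m, w, hm, hw⟩
    have hmw : (m, w) ∈ R := by
      by_contra hmw
      exact not_rel_best _ (some_mem_available.2 hmw) hm
    exact asymm_of (prefW w) hw (hR m w hmw)

variable (prefM prefW)

theorem exists_rejectStep_eq : ∃ R, RejectionsJustified prefM prefW R ∧
    AvoidsStablePairs prefM prefW R ∧ rejectStep prefM prefW R = R := by
  let S := {R : Set (M × W) | RejectionsJustified prefM prefW R ∧ AvoidsStablePairs prefM prefW R}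
  obtain ⟨R, hR, hmax⟩ :=
    S.toFinite.exists_maximal ⟨∅, fun _ _ h => h.elim, fun _ _ _ _ _ h => h.elim⟩
  exact ⟨R, hR.1, hR.2, (hmax ⟨hR.1.rejectStep, hR.2.rejectStep⟩ Set.subset_union_left).antisymm
    Set.subset_union_left⟩

end DeferredAcceptance

open DeferredAcceptance in
theorem exists_isManOptimalStableMatching {M W : Type*} [Finite M] [Finite W]
    (prefM : M → Option W → Option W → Prop) (prefW : W → Option M → Option M → Prop)
    [∀ m, IsStrictTotalOrder (Option W) (prefM m)] [∀ w, IsStrictTotalOrder (Option M) (prefW w)] :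
    ∃ μM μW, IsManOptimalStableMatching prefM prefW μM μW := by
  obtain ⟨R, hjust, havoid, hfix⟩ := exists_rejectStep_eq prefM prefW
  exact ⟨_, _, isStableMarriageMatching_of_rejectStep_eq hjust hfix,
    fun νM νW hν => propose_eq_or_rel (havoid νM νW hν)⟩

theorem man_optimal_stable_matching_exists_unique
    {M W : Type*} [Fintype M] [Fintype W]
    (prefM : M → Option W → Option W → Prop)
    (prefW : W → Option M → Option M → Prop)
    (hM : ∀ m, IsStrictTotalOrder (Option W) (prefM m))
    (hW : ∀ w, IsStrictTotalOrder (Option M) (prefW w)) :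
    ∃ (μM : M → Option W) (μW : W → Option M),
      -- μ is stable and man-optimal
      (IsStableMarriageMatching prefM prefW μM μW ∧
        ∀ (νM : M → Option W) (νW : W → Option M),
          IsStableMarriageMatching prefM prefW νM νW →
          ∀ m, μM m = νM m ∨ prefM m (μM m) (νM m)) ∧
      -- uniqueness of the man-optimal stable matching
      (∀ (νM : M → Option W) (νW : W → Option M),
        (IsStableMarriageMatching prefM prefW νM νW ∧
          ∀ (ρM : M → Option W) (ρW : W → Option M),
            IsStableMarriageMatching prefM prefW ρM ρW →
            ∀ m, νM m = ρM m ∨ prefM m (νM m) (ρM m)) →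
        νM = μM ∧ νW = μW) := by
  obtain ⟨μM, μW, hμ⟩ := exists_isManOptimalStableMatching prefM prefW
  exact ⟨μM, μW, hμ, fun νM νW hν => IsManOptimalStableMatching.eq hμ hν⟩
end

section
/- In a finite marriage market with strict preferences, the man-optimal stable matching is woman-pessimal: if μ is a stable matching such that μ(m) ≥_m μ'(m) for every stable matching μ' and every man m, then for every stable matching μ' and every woman w, μ'(w) ≥_w μ(w). -/
/-!
STATEMENT: in a finite marriage market with strict preferences, the
man-optimal stable matching is woman-pessimal: if `μ` is a stable matching
such that every man weakly prefers `μ` to any stable matching, then every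
woman weakly prefers any stable matching to `μ`.
-/
theorem man_optimal_is_woman_pessimal
    {M W : Type*} [Fintype M] [Fintype W]
    (prefM : M → Option W → Option W → Prop)
    (prefW : W → Option M → Option M → Prop)
    (hM : ∀ m, IsStrictTotalOrder (Option W) (prefM m))
    (hW : ∀ w, IsStrictTotalOrder (Option M) (prefW w))
    (μM : M → Option W) (μW : W → Option M)
    (hstable : IsStableMarriageMatching prefM prefW μM μW)
    -- man-optimality of μ
    (hopt : ∀ (νM : M → Option W) (νW : W → Option M),
      IsStableMarriageMatching prefM prefW νM νW →
      ∀ m, μM m = νM m ∨ prefM m (μM m) (νM m)) :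
    -- woman-pessimality of μ
    ∀ (νM : M → Option W) (νW : W → Option M),
      IsStableMarriageMatching prefM prefW νM νW →
      ∀ w, νW w = μW w ∨ prefW w (νW w) (μW w) := by
  intro νM νW hν w
  by_contra hcon
  push_neg at hcon
  obtain ⟨hne, hnp⟩ := hcon
  -- by trichotomy, w strictly prefers μ-partner to ν-partner
  have htri := (hW w).trichotomous (νW w) (μW w)
  have hpref : prefW w (μW w) (νW w) := by tauto
  -- μW w must be some m
  obtain ⟨hνmatch, _, hνIRW, hνnoblock⟩ := hν
  obtain ⟨hμmatch, _, _, _⟩ := hstable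
  cases hm : μW w with
  | none => exact hνIRW w (hm ▸ hpref)
  | some m =>
    have hμm : μM m = some w := (hμmatch m w).mpr hm
    rcases hopt νM νW ⟨hνmatch, ‹_›, hνIRW, hνnoblock⟩ m with heq | hlt
    · -- νM m = some w, so νW w = some m = μW w : contradiction with strict pref
      have : νW w = some m := (hνmatch m w).mp (heq ▸ hμm)
      exact (hW w).irrefl _ (by rw [hm, ← this] at hpref; exact hpref)
    · exact hνnoblock ⟨m, w, hμm ▸ hlt, hm ▸ hpref⟩
end

section
/- Every finite college admission market with strict preferences admits a valid and stable matching. -/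
/-!
Deferred acceptance, one rejection at a time. The state is the set `R` of pairs `(s, c)` such
that `c` has rejected `s`; each student proposes to their favourite acceptable college that has
not rejected them yet. A college may reject a proposer who is unacceptable to it or who is
outranked by at least `q c` of its acceptable applicants. The invariant is that every recorded
rejection is still justified in this sense: an applicant who outranks a rejected student keeps
applying unless they are rejected in turn, and then they are outranked by `q c` others. Since
there are finitely many rejection sets, one of maximal size satisfying the invariant admits no
further rejection; matching every student to the college they propose to is then stable.
-/

open Finset Function

lemma exists_forall_not_rel_comp {α β : Type*} [Finite β] (r : β → β → Prop) [IsStrictOrder β r]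
    (f : α → β) {T : Set α} (hT : T.Nonempty) : ∃ m ∈ T, ∀ x ∈ T, ¬ r (f x) (f m) :=
  (InvImage.wf f (Finite.wellFounded_of_trans_of_irrefl r)).has_min T hT

namespace CollegeAdmission

open scoped Classical

variable {S C : Type*} (q : C → ℕ) (prefS : S → Option C → Option C → Prop)
  (prefC : C → Option S → Option S → Prop)

def Proposes (R : Finset (S × C)) (s : S) (c : C) : Prop :=
  (s, c) ∉ R ∧ prefS s (some c) none ∧ ∀ c', (s, c') ∉ R → ¬ prefS s (some c') (some c)

noncomputable def applicants [Fintype S] (R : Finset (S × C)) (c : C) : Finset S :=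
  {s | Proposes prefS R s c ∧ prefC c (some s) none}

def Rejects [Fintype S] (R : Finset (S × C)) (s : S) (c : C) : Prop :=
  prefC c (some s) none → q c ≤ #{s' ∈ applicants prefS prefC R c | prefC c (some s') (some s)}

def RejectionsJustified [Fintype S] (R : Finset (S × C)) : Prop :=
  ∀ p ∈ R, Rejects q prefS prefC R p.1 p.2

def ProposalsHeld [Fintype S] (R : Finset (S × C)) : Prop :=
  ∀ s c, Proposes prefS R s c → ¬ Rejects q prefS prefC R s c

noncomputable def matchingOf [Fintype S] [Fintype C] (R : Finset (S × C)) : Finset (S × C) :=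
  {p | Proposes prefS R p.1 p.2}

variable {q prefS prefC} {R : Finset (S × C)}

@[simp]
lemma mem_matchingOf [Fintype S] [Fintype C] {p : S × C} :
    p ∈ matchingOf prefS R ↔ Proposes prefS R p.1 p.2 := by
  simp [matchingOf]

lemma proposes_insert_iff {s s₀ : S} {c c₀ : C} (hs : s ≠ s₀) :
    Proposes prefS (insert (s₀, c₀) R) s c ↔ Proposes prefS R s c := by
  simp [Proposes, hs]

lemma erase_applicants_subset [Fintype S] (s₀ : S) (c₀ c : C) :
    (applicants prefS prefC R c).erase s₀ ⊆ applicants prefS prefC (insert (s₀, c₀) R) c := by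
  intro s hs
  obtain ⟨hne, hs⟩ := mem_erase.1 hs
  simp only [applicants, mem_filter, mem_univ, true_and] at hs ⊢
  exact ⟨(proposes_insert_iff hne).2 hs.1, hs.2⟩

lemma prefC_of_proposes [Fintype S] {s : S} {c : C}
    (hR : ProposalsHeld q prefS prefC R)
    (hp : Proposes prefS R s c) : prefC c (some s) none :=
  of_not_imp (hR s c hp)

lemma acceptable_of_mem_matchingOf [Fintype S] [Fintype C] (hR : ProposalsHeld q prefS prefC R)
    {p : S × C} (hp : p ∈ matchingOf prefS R) :
    prefS p.1 (some p.2) none ∧ prefC p.2 (some p.1) none :=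
  ⟨(mem_matchingOf.1 hp).2.1, prefC_of_proposes hR (mem_matchingOf.1 hp)⟩

lemma filter_snd_matchingOf [Fintype S] [Fintype C] [DecidableEq C]
    (hR : ProposalsHeld q prefS prefC R) (c : C) :
    (matchingOf prefS R).filter (fun p => p.2 = c) =
      (applicants prefS prefC R c).map (Embedding.sectL S c) := by
  ext ⟨s, c'⟩
  simp only [mem_filter, mem_matchingOf, applicants, mem_univ, true_and, mem_map,
    Embedding.sectL_apply, Prod.mk.injEq]
  constructor
  · rintro ⟨hp, rfl⟩
    exact ⟨s, ⟨hp, prefC_of_proposes hR hp⟩, rfl, rfl⟩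
  · rintro ⟨s, ⟨hp, -⟩, rfl, rfl⟩
    exact ⟨hp, rfl⟩

section Student

variable [∀ s, IsStrictTotalOrder (Option C) (prefS s)]

lemma Proposes.unique {s : S} {c c' : C} (h : Proposes prefS R s c) (h' : Proposes prefS R s c') :
    c = c' := by
  rcases trichotomous_of (prefS s) (some c) (some c') with hlt | heq | hgt
  · exact absurd hlt (h'.2.2 c h.1)
  · exact Option.some_injective _ heq
  · exact absurd hgt (h.2.2 c' h'.1)

lemma exists_proposes [Finite C] {s : S} {c : C} (hR : (s, c) ∉ R) (hc : prefS s (some c) none) :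
    ∃ c', Proposes prefS R s c' := by
  obtain ⟨m, ⟨hmR, hm⟩, hbest⟩ := exists_forall_not_rel_comp (prefS s) some
    (T := {c | (s, c) ∉ R ∧ prefS s (some c) none}) ⟨c, hR, hc⟩
  exact ⟨m, hmR, hm, fun c' hc'R hc' => hbest c' ⟨hc'R, trans_of _ hc' hm⟩ hc'⟩

lemma card_filter_fst_matchingOf_le_one [Fintype S] [Fintype C] [DecidableEq S] (s : S) :
    #((matchingOf prefS R).filter fun p => p.1 = s) ≤ 1 := by
  refine card_le_one.2 fun a ha b hb => ?_
  simp only [mem_filter, mem_matchingOf] at ha hb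
  obtain ⟨ha, rfl⟩ := ha
  obtain ⟨hb, hab⟩ := hb
  exact Prod.ext hab.symm (ha.unique (hab ▸ hb))

lemma mem_of_prefers_to_match [Fintype S] [Fintype C] {s : S} {c : C}
    (h : (∃ c', (s, c') ∈ matchingOf prefS R ∧ prefS s (some c) (some c')) ∨
      ((∀ c', (s, c') ∉ matchingOf prefS R) ∧ prefS s (some c) none)) :
    (s, c) ∈ R := by
  by_contra hR
  rcases h with ⟨c', hc', hpref⟩ | ⟨hunmatched, hacc⟩
  · exact (mem_matchingOf.1 hc').2.2 c hR hpref
  · obtain ⟨c', hc'⟩ := exists_proposes hR hacc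
    exact hunmatched c' (mem_matchingOf.2 hc')

end Student

section College

variable [Fintype S] [∀ c, IsStrictTotalOrder (Option S) (prefC c)]

lemma card_applicants_le (hR : ProposalsHeld q prefS prefC R) (c : C) :
    #(applicants prefS prefC R c) ≤ q c := by
  by_contra! hlt
  obtain ⟨m, hm, hworst⟩ := exists_forall_not_rel_comp (swap (prefC c)) some
    (T := (applicants prefS prefC R c : Set S)) (by simpa using card_pos.1 (by omega))
  refine hR m c (mem_filter.1 hm).2.1 fun _ => ?_
  calc q c ≤ #((applicants prefS prefC R c).erase m) := by rw [card_erase_of_mem hm]; omega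
    _ ≤ _ := card_le_card fun x hx => by
      refine mem_filter.2 ⟨mem_of_mem_erase hx, ?_⟩
      rcases trichotomous_of (prefC c) (some x) (some m) with h | h | h
      · exact h
      · exact absurd (Option.some_injective _ h) (ne_of_mem_erase hx)
      · exact absurd h (hworst x (mem_of_mem_erase hx))

lemma applicants_outrank_of_mem (hJ : RejectionsJustified q prefS prefC R)
    (hR : ProposalsHeld q prefS prefC R) {s : S} {c : C}
    (hsc : (s, c) ∈ R) (hacc : prefC c (some s) none) :
    q c ≤ #(applicants prefS prefC R c) ∧
      ∀ s' ∈ applicants prefS prefC R c, prefC c (some s') (some s) := by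
  have hq := hJ _ hsc hacc
  have hcard := le_antisymm (card_filter_le _ _) ((card_applicants_le hR c).trans hq)
  exact ⟨hq.trans (card_filter_le _ _), card_filter_eq_iff.1 hcard⟩

lemma card_filter_snd_matchingOf_le [Fintype C] [DecidableEq C]
    (hR : ProposalsHeld q prefS prefC R) (c : C) :
    #((matchingOf prefS R).filter fun p => p.2 = c) ≤ q c := by
  rw [filter_snd_matchingOf hR, card_map]
  exact card_applicants_le hR c

end College

section Market

variable [Fintype S] [∀ s, IsStrictTotalOrder (Option C) (prefS s)]
  [∀ c, IsStrictTotalOrder (Option S) (prefC c)]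

lemma rejectionsJustified_insert {s₀ : S} {c₀ : C} (hJ : RejectionsJustified q prefS prefC R)
    (hp : Proposes prefS R s₀ c₀) (hrej : Rejects q prefS prefC R s₀ c₀) :
    RejectionsJustified q prefS prefC (insert (s₀, c₀) R) := by
  rintro ⟨s, c⟩ hmem (hacc : prefC c (some s) none)
  have mono : ∀ {t u : S}, (∀ s' ∈ applicants prefS prefC R c,
      prefC c (some s') (some u) → s' ≠ s₀ ∧ prefC c (some s') (some t)) →
      #{s' ∈ applicants prefS prefC R c | prefC c (some s') (some u)} ≤
        #{s' ∈ applicants prefS prefC (insert (s₀, c₀) R) c | prefC c (some s') (some t)} := by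
    intro t u h
    refine card_le_card fun s' hs' => ?_
    obtain ⟨hA, hu⟩ := mem_filter.1 hs'
    obtain ⟨hne, ht⟩ := h s' hA hu
    exact mem_filter.2 ⟨erase_applicants_subset s₀ c₀ c (mem_erase.2 ⟨hne, hA⟩), ht⟩
  have irrefl_ne : ∀ {a b : S}, prefC c (some a) (some b) → a ≠ b := by
    rintro a b h rfl
    exact irrefl_of _ _ h
  rcases mem_insert.1 hmem with heq | hmemR
  · obtain ⟨rfl, rfl⟩ := Prod.ext_iff.1 heq
    exact (hrej hacc).trans (mono fun s' _ h => ⟨irrefl_ne h, h⟩)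
  by_cases houtranked : s₀ ∈ applicants prefS prefC R c ∧ prefC c (some s₀) (some s)
  · obtain ⟨hs₀, hs₀s⟩ := houtranked
    obtain ⟨hs₀c, hs₀acc⟩ := (mem_filter.1 hs₀).2
    obtain rfl := hp.unique hs₀c
    exact (hrej hs₀acc).trans (mono fun s' _ h => ⟨irrefl_ne h, trans_of _ h hs₀s⟩)
  · exact (hJ _ hmemR hacc).trans
      (mono fun s' hA h => ⟨fun e => houtranked ⟨e ▸ hA, e ▸ h⟩, h⟩)

variable (q prefS prefC) in
lemma exists_rejectionsJustified_proposalsHeld [Fintype C] :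
    ∃ R : Finset (S × C), RejectionsJustified q prefS prefC R ∧
      ProposalsHeld q prefS prefC R := by
  obtain ⟨R, hR, hmax⟩ := exists_max_image {R | RejectionsJustified q prefS prefC R} card
    ⟨∅, by simp [RejectionsJustified]⟩
  have hJ := (mem_filter.1 hR).2
  refine ⟨R, hJ, fun s c hp hrej => ?_⟩
  have := hmax _ (mem_filter.2 ⟨mem_univ _, rejectionsJustified_insert hJ hp hrej⟩)
  rw [card_insert_of_notMem hp.1] at this
  omega

lemma not_exists_blocking_pair [Fintype C] [DecidableEq C]
    (hJ : RejectionsJustified q prefS prefC R)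
    (hR : ProposalsHeld q prefS prefC R) :
    ¬ ∃ (s : S) (c : C), (s, c) ∉ matchingOf prefS R ∧
      ((∃ c', (s, c') ∈ matchingOf prefS R ∧ prefS s (some c) (some c')) ∨
        ((∀ c', (s, c') ∉ matchingOf prefS R) ∧ prefS s (some c) none)) ∧
      ((∃ s', (s', c) ∈ matchingOf prefS R ∧ prefC c (some s) (some s')) ∨
        (((matchingOf prefS R).filter fun p => p.2 = c).card < q c ∧
          prefC c (some s) none)) := by
  rintro ⟨s, c, -, hstudent, hcollege⟩
  have hacc : prefC c (some s) none := by
    rcases hcollege with ⟨s', hs', h⟩ | ⟨-, h⟩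
    · exact trans_of _ h (prefC_of_proposes hR (mem_matchingOf.1 hs'))
    · exact h
  obtain ⟨hq, houtrank⟩ := applicants_outrank_of_mem hJ hR (mem_of_prefers_to_match hstudent) hacc
  rcases hcollege with ⟨s', hs', h⟩ | ⟨hlt, -⟩
  · have hs'c := mem_matchingOf.1 hs'
    exact asymm_of _ h (houtrank s' (mem_filter.2 ⟨mem_univ _, hs'c, prefC_of_proposes hR hs'c⟩))
  · rw [filter_snd_matchingOf hR, card_map] at hlt
    omega

end Market

end CollegeAdmission

theorem college_admission_exists_stable_matching_general
    {S C : Type*} [Fintype S] [Fintype C] [DecidableEq S] [DecidableEq C]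
    (q : C → ℕ)
    (prefS : S → Option C → Option C → Prop)
    (prefC : C → Option S → Option S → Prop)
    (hS : ∀ s, IsStrictTotalOrder (Option C) (prefS s))
    (hC : ∀ c, IsStrictTotalOrder (Option S) (prefC c)) :
    ∃ μ : Finset (S × C),
      -- valid matching: each student at most once, each college within quota
      (∀ s : S, (μ.filter fun p => p.1 = s).card ≤ 1) ∧
      (∀ c : C, (μ.filter fun p => p.2 = c).card ≤ q c) ∧
      -- individual rationality: nobody matched to an unacceptable partner
      (∀ p ∈ μ, prefS p.1 (some p.2) none ∧ prefC p.2 (some p.1) none) ∧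
      -- no blocking pair
      ¬ ∃ (s : S) (c : C), (s, c) ∉ μ ∧
          -- c >_s μ(s)
          ((∃ c', (s, c') ∈ μ ∧ prefS s (some c) (some c')) ∨
            ((∀ c', (s, c') ∉ μ) ∧ prefS s (some c) none)) ∧
          -- s >_c μ(c)  (μ(c) padded with copies of c up to size q c)
          ((∃ s', (s', c) ∈ μ ∧ prefC c (some s) (some s')) ∨
            ((μ.filter fun p => p.2 = c).card < q c ∧ prefC c (some s) none)) := by
  have := hS
  have := hC
  obtain ⟨R, hJ, hR⟩ := CollegeAdmission.exists_rejectionsJustified_proposalsHeld q prefS prefC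
  open CollegeAdmission in
  exact ⟨matchingOf prefS R, card_filter_fst_matchingOf_le_one,
    card_filter_snd_matchingOf_le hR, fun _ => acceptable_of_mem_matchingOf hR,
    not_exists_blocking_pair hJ hR⟩

theorem college_admission_exists_stable_matching
    {S C : Type*} [Fintype S] [Fintype C] [DecidableEq S] [DecidableEq C]
    (q : C → ℕ) (hq : ∀ c, 1 ≤ q c)
    (prefS : S → Option C → Option C → Prop)
    (prefC : C → Option S → Option S → Prop)
    (hS : ∀ s, IsStrictTotalOrder (Option C) (prefS s))
    (hC : ∀ c, IsStrictTotalOrder (Option S) (prefC c)) :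
    ∃ μ : Finset (S × C),
      -- valid matching: each student at most once, each college within quota
      (∀ s : S, (μ.filter fun p => p.1 = s).card ≤ 1) ∧
      (∀ c : C, (μ.filter fun p => p.2 = c).card ≤ q c) ∧
      -- individual rationality: nobody matched to an unacceptable partner
      (∀ p ∈ μ, prefS p.1 (some p.2) none ∧ prefC p.2 (some p.1) none) ∧
      -- no blocking pair
      ¬ ∃ (s : S) (c : C), (s, c) ∉ μ ∧
          -- c >_s μ(s)
          ((∃ c', (s, c') ∈ μ ∧ prefS s (some c) (some c')) ∨
            ((∀ c', (s, c') ∉ μ) ∧ prefS s (some c) none)) ∧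
          -- s >_c μ(c)  (μ(c) padded with copies of c up to size q c)
          ((∃ s', (s', c) ∈ μ ∧ prefC c (some s) (some s')) ∨
            ((μ.filter fun p => p.2 = c).card < q c ∧ prefC c (some s) none)) :=
  college_admission_exists_stable_matching_general q prefS prefC hS hC
end

section
/- Let a college admission market be given, and construct the extended marriage market in which each college c is replaced by q_c copies c_1, …, c_{q_c}, each copy c_i ranks students by the same strict order as c (with c_i in place of c), and each student's weak preference order ranks all copies c_1, …, c_{q_c} tied, at the position that c occupied in the student's original strict order. Then a valid matching μ on the college admission market is stable if and only if any matching on the extended marriage market obtained from μ by assigning the students in μ(c) bijectively to distinct copies of c (for every college c) is stable on the extended marriage market, where blocking on the extended market is defined via the strict parts of the (weak) preference orders. -/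
/-!
When `ν` seats the students of each `μ(c)` on distinct copies of `c`, a student's partner in `ν`,
projected to its college, is the student's partner in `μ`, and a college has a vacant seat in `μ`
exactly when one of its copies is single in `ν`. The students' weak preferences are pulled back
from the strict ones along this projection, so their strict parts are the original orders, and
both the individual rationality and the blocking conditions of the two markets translate into each
other term by term. The one extra clause `(s, c) ∉ μ` of a blocking pair is automatic: `s` cannot
strictly prefer `c` to its own partner `c`.
-/

open Finset

theorem Option.exists_eq_some_and_or_forall_ne_and_iff {α : Type*} {m : Option α}
    {P : Option α → Prop} :
    ((∃ a, m = some a ∧ P (some a)) ∨ ((∀ a, m ≠ some a) ∧ P none)) ↔ P m := by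
  cases m <;> simp

theorem not_rel_none_iff {α : Type*} {r : Option α → Option α → Prop} [Std.Trichotomous r]
    [Std.Asymm r] {m : Option α} : ¬ r none m ↔ ∀ a, m = some a → r (some a) none := by
  cases m with
  | none => simpa using irrefl none
  | some a =>
    simp only [Option.some.injEq, forall_eq']
    exact ⟨fun h => ((trichotomous _ _).resolve_left h).resolve_left nofun, asymm⟩

theorem not_rel_and_rel_iff {α : Sort*} {r : α → α → Prop} [Std.Asymm r] {a b : α} :
    ¬ r b a ∧ r a b ↔ r a b :=
  and_iff_right_of_imp asymm

section ExtendedMatching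

variable {S C : Type*} {q : C → ℕ} {μ : Finset (S × C)}
  {νS : S → Option (Σ c : C, Fin (q c))} {νC : (Σ c : C, Fin (q c)) → Option S}

theorem mem_iff_map_fst_eq_some
    (hcompat : ∀ s c, (s, c) ∈ μ ↔ ∃ i : Fin (q c), νS s = some ⟨c, i⟩) (s : S) (c : C) :
    (s, c) ∈ μ ↔ (νS s).map Sigma.fst = some c := by
  rw [hcompat]
  rcases νS s with _ | ⟨c', i⟩
  · simp
  · constructor
    · rintro ⟨i, h⟩; cases h; rfl
    · rintro ⟨⟩; exact ⟨i, rfl⟩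

theorem mem_iff_exists_copy_eq_some (hν : ∀ s w, νS s = some w ↔ νC w = some s)
    (hcompat : ∀ s c, (s, c) ∈ μ ↔ ∃ i : Fin (q c), νS s = some ⟨c, i⟩) (s : S) (c : C) :
    (s, c) ∈ μ ↔ ∃ i, νC ⟨c, i⟩ = some s := by
  simp only [hcompat, hν]

theorem card_filter_snd_eq_card_filter_isSome [DecidableEq C]
    (hν : ∀ s w, νS s = some w ↔ νC w = some s)
    (hcompat : ∀ s c, (s, c) ∈ μ ↔ ∃ i : Fin (q c), νS s = some ⟨c, i⟩) (c : C) :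
    #(μ.filter fun p => p.2 = c) = #(univ.filter fun i : Fin (q c) => (νC ⟨c, i⟩).isSome) := by
  refine (card_bij (fun i hi => ((νC ⟨c, i⟩).get (mem_filter.1 hi).2, c)) ?_ ?_ ?_).symm
  · intro i hi
    simp only [mem_filter]
    exact ⟨(mem_iff_exists_copy_eq_some hν hcompat _ _).2 ⟨i, (Option.some_get _).symm⟩, trivial⟩
  · intro i hi j hj hij
    have hsi := (hν _ _).2 (Option.some_get (mem_filter.1 hi).2).symm
    have hsj := (hν _ _).2 (Option.some_get (mem_filter.1 hj).2).symm
    rw [(Prod.mk.inj hij).1, hsj] at hsi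
    simpa using hsi.symm
  · rintro ⟨s, c'⟩ hp
    obtain ⟨hmem, rfl : c' = c⟩ := mem_filter.1 hp
    obtain ⟨i, hi⟩ := (mem_iff_exists_copy_eq_some hν hcompat _ _).1 hmem
    exact ⟨i, by simp [hi], by simp [hi]⟩

theorem card_filter_snd_lt_iff_exists_copy_eq_none [DecidableEq C]
    (hν : ∀ s w, νS s = some w ↔ νC w = some s)
    (hcompat : ∀ s c, (s, c) ∈ μ ↔ ∃ i : Fin (q c), νS s = some ⟨c, i⟩) (c : C) :
    #(μ.filter fun p => p.2 = c) < q c ↔ ∃ i, νC ⟨c, i⟩ = none := by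
  have hlt := card_lt_iff_ne_univ (univ.filter fun i : Fin (q c) => (νC ⟨c, i⟩).isSome)
  rw [Fintype.card_fin] at hlt
  rw [card_filter_snd_eq_card_filter_isSome hν hcompat, hlt, Ne, filter_eq_self]
  simp

theorem exists_mem_and_or_forall_not_mem_and_iff
    (hcompat : ∀ s c, (s, c) ∈ μ ↔ ∃ i : Fin (q c), νS s = some ⟨c, i⟩)
    (P : Option C → Prop) (s : S) :
    ((∃ c, (s, c) ∈ μ ∧ P (some c)) ∨ ((∀ c, (s, c) ∉ μ) ∧ P none)) ↔
      P ((νS s).map Sigma.fst) := by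
  simp only [mem_iff_map_fst_eq_some hcompat]
  exact Option.exists_eq_some_and_or_forall_ne_and_iff

theorem exists_mem_and_or_card_lt_and_iff [DecidableEq C]
    (hν : ∀ s w, νS s = some w ↔ νC w = some s)
    (hcompat : ∀ s c, (s, c) ∈ μ ↔ ∃ i : Fin (q c), νS s = some ⟨c, i⟩)
    (P : Option S → Prop) (c : C) :
    ((∃ s, (s, c) ∈ μ ∧ P (some s)) ∨ (#(μ.filter fun p => p.2 = c) < q c ∧ P none)) ↔
      ∃ i, P (νC ⟨c, i⟩) := by
  rw [card_filter_snd_lt_iff_exists_copy_eq_none hν hcompat]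
  simp only [mem_iff_exists_copy_eq_some hν hcompat]
  constructor
  · rintro (⟨s, ⟨i, hi⟩, h⟩ | ⟨⟨i, hi⟩, h⟩) <;> exact ⟨i, hi ▸ h⟩
  · rintro ⟨i, h⟩
    cases hi : νC ⟨c, i⟩ with
    | none => exact .inr ⟨⟨i, hi⟩, hi ▸ h⟩
    | some s => exact .inl ⟨s, ⟨i, hi⟩, hi ▸ h⟩

theorem forall_mem_rel_none_iff
    (hν : ∀ s w, νS s = some w ↔ νC w = some s)
    (hcompat : ∀ s c, (s, c) ∈ μ ↔ ∃ i : Fin (q c), νS s = some ⟨c, i⟩)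
    {prefS : S → Option C → Option C → Prop} {prefC : C → Option S → Option S → Prop}
    [∀ s, Std.Trichotomous (prefS s)] [∀ s, Std.Asymm (prefS s)]
    [∀ c, Std.Trichotomous (prefC c)] [∀ c, Std.Asymm (prefC c)] :
    (∀ p ∈ μ, prefS p.1 (some p.2) none ∧ prefC p.2 (some p.1) none) ↔
      (∀ s, ¬ prefS s none ((νS s).map Sigma.fst)) ∧ ∀ w, ¬ prefC w.1 none (νC w) := by
  simp only [not_rel_none_iff, Prod.forall, Sigma.forall, forall_and]
  refine and_congr (forall₂_congr fun s c => by rw [mem_iff_map_fst_eq_some hcompat]) ?_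
  simp only [mem_iff_exists_copy_eq_some hν hcompat, forall_exists_index]
  exact ⟨fun h c i s => h s c i, fun h s c i => h c i s⟩

theorem exists_blocking_pair_iff
    (hν : ∀ s w, νS s = some w ↔ νC w = some s)
    (hcompat : ∀ s c, (s, c) ∈ μ ↔ ∃ i : Fin (q c), νS s = some ⟨c, i⟩)
    {prefS : S → Option C → Option C → Prop} {prefC : C → Option S → Option S → Prop}
    [∀ s, Std.Irrefl (prefS s)] [DecidableEq C] :
    (∃ (s : S) (c : C), (s, c) ∉ μ ∧
        ((∃ c', (s, c') ∈ μ ∧ prefS s (some c) (some c')) ∨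
          ((∀ c', (s, c') ∉ μ) ∧ prefS s (some c) none)) ∧
        ((∃ s', (s', c) ∈ μ ∧ prefC c (some s) (some s')) ∨
          ((μ.filter fun p => p.2 = c).card < q c ∧ prefC c (some s) none))) ↔
      ∃ (s : S) (w : Σ c : C, Fin (q c)),
        prefS s (some w.1) ((νS s).map Sigma.fst) ∧ prefC w.1 (some s) (νC w) := by
  simp only [exists_mem_and_or_forall_not_mem_and_iff hcompat (prefS _ (some _)),
    exists_mem_and_or_card_lt_and_iff hν hcompat (prefC _ (some _)), Sigma.exists,
    exists_and_left]
  refine exists_congr fun s => exists_congr fun c => and_iff_right_of_imp fun ⟨h, _⟩ hmem => ?_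
  rw [mem_iff_map_fst_eq_some hcompat] at hmem
  exact irrefl _ (hmem ▸ h)

end ExtendedMatching

theorem college_market_stable_iff_extended_market_stable_general
    {S C : Type*} [DecidableEq C]
    (q : C → ℕ)
    (prefS : S → Option C → Option C → Prop)
    (prefC : C → Option S → Option S → Prop)
    (hS : ∀ s, IsStrictTotalOrder (Option C) (prefS s))
    (hC : ∀ c, IsStrictTotalOrder (Option S) (prefC c))
    -- a valid matching μ of the college admission market
    (μ : Finset (S × C))
    -- a matching ν of the extended marriage market …
    (νS : S → Option (Σ c : C, Fin (q c)))
    (νC : (Σ c : C, Fin (q c)) → Option S)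
    (hν : ∀ s w, νS s = some w ↔ νC w = some s)
    -- … obtained from μ by assigning the students in μ(c) bijectively to
    -- distinct copies of c (distinctness is automatic from `hν`)
    (hcompat : ∀ s c, (s, c) ∈ μ ↔ ∃ i : Fin (q c), νS s = some ⟨c, i⟩) :
    -- students' weak preferences on the extended market: all copies of a
    -- college are tied, at the position the college occupied originally
    (let proj : Option (Σ c : C, Fin (q c)) → Option C := Option.map Sigma.fst
     let geS : S → Option (Σ c : C, Fin (q c)) → Option (Σ c : C, Fin (q c)) → Prop :=
       fun s a b => ¬ prefS s (proj b) (proj a)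
     -- copies' weak preferences over students: same order as the college
     let geC : (Σ c : C, Fin (q c)) → Option S → Option S → Prop :=
       fun w a b => ¬ prefC w.1 b a
     -- μ is stable on the college admission market …
     (((∀ p ∈ μ, prefS p.1 (some p.2) none ∧ prefC p.2 (some p.1) none) ∧
        ¬ ∃ (s : S) (c : C), (s, c) ∉ μ ∧
            ((∃ c', (s, c') ∈ μ ∧ prefS s (some c) (some c')) ∨
              ((∀ c', (s, c') ∉ μ) ∧ prefS s (some c) none)) ∧
            ((∃ s', (s', c) ∈ μ ∧ prefC c (some s) (some s')) ∨
              ((μ.filter fun p => p.2 = c).card < q c ∧ prefC c (some s) none)))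
      ↔
      -- … iff ν is stable on the extended marriage market (with blocking
      -- defined via the strict parts of the weak preferences)
      ((∀ s, ¬ (geS s none (νS s) ∧ ¬ geS s (νS s) none)) ∧
       (∀ w, ¬ (geC w none (νC w) ∧ ¬ geC w (νC w) none)) ∧
       ¬ ∃ (s : S) (w : Σ c : C, Fin (q c)),
           (geS s (some w) (νS s) ∧ ¬ geS s (νS s) (some w)) ∧
           (geC w (some s) (νC w) ∧ ¬ geC w (νC w) (some s))))) := by
  intro proj geS geC
  have := hS
  have := hC
  simp only [geS, geC, proj, Option.map_none, Option.map_some, not_not, not_rel_and_rel_iff]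
  rw [forall_mem_rel_none_iff hν hcompat, exists_blocking_pair_iff hν hcompat, and_assoc]

theorem college_market_stable_iff_extended_market_stable
    {S C : Type*} [Fintype S] [Fintype C] [DecidableEq S] [DecidableEq C]
    (q : C → ℕ) (hq : ∀ c, 1 ≤ q c)
    (prefS : S → Option C → Option C → Prop)
    (prefC : C → Option S → Option S → Prop)
    (hS : ∀ s, IsStrictTotalOrder (Option C) (prefS s))
    (hC : ∀ c, IsStrictTotalOrder (Option S) (prefC c))
    -- a valid matching μ of the college admission market
    (μ : Finset (S × C))
    (hvalS : ∀ s : S, (μ.filter fun p => p.1 = s).card ≤ 1)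
    (hvalC : ∀ c : C, (μ.filter fun p => p.2 = c).card ≤ q c)
    -- a matching ν of the extended marriage market …
    (νS : S → Option (Σ c : C, Fin (q c)))
    (νC : (Σ c : C, Fin (q c)) → Option S)
    (hν : ∀ s w, νS s = some w ↔ νC w = some s)
    -- … obtained from μ by assigning the students in μ(c) bijectively to
    -- distinct copies of c (distinctness is automatic from `hν`)
    (hcompat : ∀ s c, (s, c) ∈ μ ↔ ∃ i : Fin (q c), νS s = some ⟨c, i⟩) :
    -- students' weak preferences on the extended market: all copies of a
    -- college are tied, at the position the college occupied originally
    (let proj : Option (Σ c : C, Fin (q c)) → Option C := Option.map Sigma.fst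
     let geS : S → Option (Σ c : C, Fin (q c)) → Option (Σ c : C, Fin (q c)) → Prop :=
       fun s a b => ¬ prefS s (proj b) (proj a)
     -- copies' weak preferences over students: same order as the college
     let geC : (Σ c : C, Fin (q c)) → Option S → Option S → Prop :=
       fun w a b => ¬ prefC w.1 b a
     -- μ is stable on the college admission market …
     (((∀ p ∈ μ, prefS p.1 (some p.2) none ∧ prefC p.2 (some p.1) none) ∧
        ¬ ∃ (s : S) (c : C), (s, c) ∉ μ ∧
            ((∃ c', (s, c') ∈ μ ∧ prefS s (some c) (some c')) ∨
              ((∀ c', (s, c') ∉ μ) ∧ prefS s (some c) none)) ∧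
            ((∃ s', (s', c) ∈ μ ∧ prefC c (some s) (some s')) ∨
              ((μ.filter fun p => p.2 = c).card < q c ∧ prefC c (some s) none)))
      ↔
      -- … iff ν is stable on the extended marriage market (with blocking
      -- defined via the strict parts of the weak preferences)
      ((∀ s, ¬ (geS s none (νS s) ∧ ¬ geS s (νS s) none)) ∧
       (∀ w, ¬ (geC w none (νC w) ∧ ¬ geC w (νC w) none)) ∧
       ¬ ∃ (s : S) (w : Σ c : C, Fin (q c)),
           (geS s (some w) (νS s) ∧ ¬ geS s (νS s) (some w)) ∧
           (geC w (some s) (νC w) ∧ ¬ geC w (νC w) (some s))))) :=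
  college_market_stable_iff_extended_market_stable_general q prefS prefC hS hC μ νS νC hν hcompat
end

section
/- Every finite polygamous (many-to-many) market with strict preferences admits a valid stable matching, i.e., a matching in which every man m is matched to at most q_m distinct women, every woman w is matched to at most q_w distinct men, the same man-woman pair is matched at most once, no one is matched to an unacceptable partner, and there is no blocking pair. -/
open scoped Classical

noncomputable def chooseTop {α : Type*} (r : α → α → Prop) (k : ℕ) (S : Finset α) : Finset α :=
  S.filter fun x => (S.filter fun y => r y x).card < k

theorem chooseTop_subset {α : Type*} (r : α → α → Prop) (k : ℕ) (S : Finset α) :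
    chooseTop r k S ⊆ S := Finset.filter_subset _ _

theorem bcount_lt {α : Type*} {r : α → α → Prop}
    (htr : ∀ a b c, r a b → r b c → r a c) (hirr : ∀ a, ¬ r a a)
    {S : Finset α} {x y : α} (hx : x ∈ S) (hxy : r x y) :
    (S.filter fun z => r z x).card < (S.filter fun z => r z y).card := by
  have h1 : insert x (S.filter fun z => r z x) ⊆ S.filter fun z => r z y := by
    intro z hz
    rcases Finset.mem_insert.mp hz with rfl | hz
    · exact Finset.mem_filter.mpr ⟨hx, hxy⟩
    · obtain ⟨hzS, hzx⟩ := Finset.mem_filter.mp hz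
      exact Finset.mem_filter.mpr ⟨hzS, htr _ _ _ hzx hxy⟩
  have h2 : x ∉ S.filter fun z => r z x := fun h => hirr x (Finset.mem_filter.mp h).2
  have h3 := Finset.card_le_card h1
  rw [Finset.card_insert_of_notMem h2] at h3
  omega

theorem chooseTop_card_le {α : Type*} {r : α → α → Prop}
    (htr : ∀ a b c, r a b → r b c → r a c) (hirr : ∀ a, ¬ r a a)
    (htot : ∀ a b, a ≠ b → r a b ∨ r b a) (k : ℕ) (S : Finset α) :
    (chooseTop r k S).card ≤ k := by
  have h := Finset.card_le_card_of_injOn (s := chooseTop r k S)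
      (f := fun x => (S.filter fun y => r y x).card) (t := Finset.range k) ?_ ?_
  · simpa using h
  · intro x hx
    simpa [Finset.mem_range] using (Finset.mem_filter.mp hx).2
  · intro x hx y hy hxy
    simp only [Finset.mem_coe] at hx hy
    by_contra hne
    have hxS := chooseTop_subset r k S hx
    have hyS := chooseTop_subset r k S hy
    rcases htot x y hne with h | h
    · exact absurd hxy (Nat.ne_of_lt (bcount_lt htr hirr hxS h))
    · exact absurd hxy.symm (Nat.ne_of_lt (bcount_lt htr hirr hyS h))

theorem chooseTop_mono {α : Type*} {r : α → α → Prop} {k : ℕ} {S' S : Finset α} {x : α}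
    (hS : S' ⊆ S) (hx : x ∈ chooseTop r k S) (hx' : x ∈ S') : x ∈ chooseTop r k S' := by
  obtain ⟨-, h2⟩ := Finset.mem_filter.mp hx
  refine Finset.mem_filter.mpr ⟨hx', lt_of_le_of_lt ?_ h2⟩
  exact Finset.card_le_card (Finset.filter_subset_filter _ hS)

theorem chooseTop_beats {α : Type*} {r : α → α → Prop}
    (htr : ∀ a b c, r a b → r b c → r a c) (hirr : ∀ a, ¬ r a a)
    (htot : ∀ a b, a ≠ b → r a b ∨ r b a) {k : ℕ} {S : Finset α} {x : α}
    (hxS : x ∈ S) (hx : x ∉ chooseTop r k S) :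
    ∀ y ∈ chooseTop r k S, r y x := by
  intro y hy
  by_contra hyx
  have hybc : (S.filter fun z => r z y).card < k := (Finset.mem_filter.mp hy).2
  have hxbc : k ≤ (S.filter fun z => r z x).card := by
    by_contra h
    exact hx (Finset.mem_filter.mpr ⟨hxS, Nat.lt_of_not_le h⟩)
  have hne : x ≠ y := by rintro rfl; exact hx hy
  rcases htot x y hne with h | h
  · have := bcount_lt htr hirr hxS h
    omega
  · exact hyx h

theorem chooseTop_notMem_card_le {α : Type*} {r : α → α → Prop} {k : ℕ} {S : Finset α} {x : α}
    (hxS : x ∈ S) (hx : x ∉ chooseTop r k S) : k ≤ S.card := by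
  have hxbc : k ≤ (S.filter fun z => r z x).card := by
    by_contra h
    exact hx (Finset.mem_filter.mpr ⟨hxS, Nat.lt_of_not_le h⟩)
  exact hxbc.trans (Finset.card_le_card (Finset.filter_subset _ _))

theorem chooseTop_card_eq {α : Type*} {r : α → α → Prop}
    (htr : ∀ a b c, r a b → r b c → r a c) (hirr : ∀ a, ¬ r a a)
    (htot : ∀ a b, a ≠ b → r a b ∨ r b a) {k : ℕ} {S : Finset α}
    (hk : k ≤ S.card) : (chooseTop r k S).card = k := by
  refine le_antisymm (chooseTop_card_le htr hirr htot k S) ?_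
  by_cases hall : S ⊆ chooseTop r k S
  · have : chooseTop r k S = S := Finset.Subset.antisymm (chooseTop_subset r k S) hall
    rw [this]; exact hk
  · rw [Finset.not_subset] at hall
    obtain ⟨x0, hx0S, hx0⟩ := hall
    obtain ⟨x, hxmem, hxmin⟩ := Finset.exists_min_image (S \ chooseTop r k S)
        (fun z => (S.filter fun y => r y z).card) ⟨x0, Finset.mem_sdiff.mpr ⟨hx0S, hx0⟩⟩
    have hxS : x ∈ S := (Finset.mem_sdiff.mp hxmem).1
    have hxnot : x ∉ chooseTop r k S := (Finset.mem_sdiff.mp hxmem).2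
    have hsub : (S.filter fun z => r z x) ⊆ chooseTop r k S := by
      intro z hz
      obtain ⟨hzS, hzx⟩ := Finset.mem_filter.mp hz
      by_contra hznot
      have h1 := hxmin z (Finset.mem_sdiff.mpr ⟨hzS, hznot⟩)
      have h2 := bcount_lt htr hirr hzS hzx
      omega
    have hk' : k ≤ (S.filter fun z => r z x).card := by
      by_contra h
      exact hxnot (Finset.mem_filter.mpr ⟨hxS, Nat.lt_of_not_le h⟩)
    exact hk'.trans (Finset.card_le_card hsub)

theorem chooseTop_all_beat {α : Type*} {r : α → α → Prop}
    (htr : ∀ a b c, r a b → r b c → r a c) (hirr : ∀ a, ¬ r a a)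
    (htot : ∀ a b, a ≠ b → r a b ∨ r b a) {k : ℕ} {T S : Finset α} {x : α}
    (hTS : T ⊆ S) (hT : k ≤ T.card) (hbeat : ∀ t ∈ T, r t x) :
    ∀ y ∈ chooseTop r k S, r y x := by
  intro y hy
  by_contra hyx
  have hsub : T ⊆ S.filter fun z => r z y := by
    intro t ht
    refine Finset.mem_filter.mpr ⟨hTS ht, ?_⟩
    have htx := hbeat t ht
    by_cases hxy : y = x
    · exact hxy ▸ htx
    · rcases htot y x hxy with h | h
      · exact absurd h hyx
      · exact htr _ _ _ htx h
  have h1 := (Finset.card_le_card hsub)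
  have h2 := (Finset.mem_filter.mp hy).2
  omega

section Market

variable {M W : Type*} [Fintype M] [Fintype W] [DecidableEq M] [DecidableEq W]

/-- Women still available to man `m` given rejection set `R`. -/
noncomputable def WsetX (prefM : M → Option W → Option W → Prop)
    (R : Finset (M × W)) (m : M) : Finset W :=
  Finset.univ.filter fun w => prefM m (some w) none ∧ (m, w) ∉ R

/-- The set of proposals made by the men given rejection set `R`. -/
noncomputable def CMX (qM : M → ℕ) (prefM : M → Option W → Option W → Prop)
    (R : Finset (M × W)) : Finset (M × W) :=
  Finset.univ.filter fun p =>
    p.2 ∈ chooseTop (fun a b => prefM p.1 (some a) (some b)) (qM p.1) (WsetX prefM R p.1)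

/-- Acceptable proposers at woman `w` in proposal set `S`. -/
noncomputable def PwX (prefW : W → Option M → Option M → Prop)
    (S : Finset (M × W)) (w : W) : Finset M :=
  Finset.univ.filter fun m => (m, w) ∈ S ∧ prefW w (some m) none

/-- Men held by woman `w` given rejection set `R`. -/
noncomputable def HwX (qM : M → ℕ) (qW : W → ℕ)
    (prefM : M → Option W → Option W → Prop) (prefW : W → Option M → Option M → Prop)
    (R : Finset (M × W)) (w : W) : Finset M :=
  chooseTop (fun a b => prefW w (some a) (some b)) (qW w)
    (PwX prefW (CMX qM prefM R) w)

/-- The tentative matching given rejection set `R`. -/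
noncomputable def muX (qM : M → ℕ) (qW : W → ℕ)
    (prefM : M → Option W → Option W → Prop) (prefW : W → Option M → Option M → Prop)
    (R : Finset (M × W)) : Finset (M × W) :=
  (CMX qM prefM R).filter fun p => p.1 ∈ HwX qM qW prefM prefW R p.2

/-- One round of deferred acceptance: add newly rejected pairs. -/
noncomputable def FX (qM : M → ℕ) (qW : W → ℕ)
    (prefM : M → Option W → Option W → Prop) (prefW : W → Option M → Option M → Prop)
    (R : Finset (M × W)) : Finset (M × W) :=
  R ∪ (CMX qM prefM R \ muX qM qW prefM prefW R)

/-- Invariant: every rejected acceptable pair `(m, w)` has `w` holding a full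
quota of proposers all better than `m`. -/
def InvX (qM : M → ℕ) (qW : W → ℕ)
    (prefM : M → Option W → Option W → Prop) (prefW : W → Option M → Option M → Prop)
    (R : Finset (M × W)) : Prop :=
  ∀ p ∈ R, prefW p.2 (some p.1) none →
    qW p.2 ≤ (PwX prefW (CMX qM prefM R) p.2).card ∧
    ∀ m' ∈ HwX qM qW prefM prefW R p.2, prefW p.2 (some m') (some p.1)

end Market



/-!
A polygamous (many-to-many) market: finite sets of men `M` and women `W`,
quotas `qM m ≥ 1`, `qW w ≥ 1`, a strict total order `prefM m` on `Option W`
for each man (`none` = the man himself) and a strict total order `prefW w`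
on `Option M` for each woman.  A valid matching is a finite set
`μ ⊆ M × W` (so the same pair is matched at most once) in which each man
`m` appears at most `qM m` times and each woman `w` at most `qW w` times.
A pair `(m, w) ∉ μ` blocks `μ` if `w >_m μ(m)` and `m >_w μ(w)`, where the
assignments are padded with copies of the person up to their quota.

STATEMENT: every finite polygamous market with strict preferences admits a
valid stable matching.
-/
theorem polygamous_market_exists_stable_matching
    {M W : Type*} [Fintype M] [Fintype W] [DecidableEq M] [DecidableEq W]
    (qM : M → ℕ) (qW : W → ℕ) (hqM : ∀ m, 1 ≤ qM m) (hqW : ∀ w, 1 ≤ qW w)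
    (prefM : M → Option W → Option W → Prop)
    (prefW : W → Option M → Option M → Prop)
    (hM : ∀ m, IsStrictTotalOrder (Option W) (prefM m))
    (hW : ∀ w, IsStrictTotalOrder (Option M) (prefW w)) :
    ∃ μ : Finset (M × W),
      -- valid matching: quotas respected on both sides
      (∀ m : M, (μ.filter fun p => p.1 = m).card ≤ qM m) ∧
      (∀ w : W, (μ.filter fun p => p.2 = w).card ≤ qW w) ∧
      -- individual rationality: nobody matched to an unacceptable partner
      (∀ p ∈ μ, prefM p.1 (some p.2) none ∧ prefW p.2 (some p.1) none) ∧
      -- no blocking pair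
      ¬ ∃ (m : M) (w : W), (m, w) ∉ μ ∧
          -- w >_m μ(m)  (μ(m) padded with copies of m up to qM m)
          ((∃ w', (m, w') ∈ μ ∧ prefM m (some w) (some w')) ∨
            ((μ.filter fun p => p.1 = m).card < qM m ∧ prefM m (some w) none)) ∧
          -- m >_w μ(w)  (μ(w) padded with copies of w up to qW w)
          ((∃ m', (m', w) ∈ μ ∧ prefW w (some m) (some m')) ∨
            ((μ.filter fun p => p.2 = w).card < qW w ∧ prefW w (some m) none)) := by

  -- basic order facts
  have trM : ∀ m (a b c : Option W), prefM m a b → prefM m b c → prefM m a c := by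
    intro m a b c hab hbc
    haveI := hM m
    exact _root_.trans_of (prefM m) hab hbc
  have irM : ∀ m (a : Option W), ¬ prefM m a a := by
    intro m a
    haveI := hM m
    exact irrefl_of (prefM m) a
  have toM : ∀ m (a b : Option W), a ≠ b → prefM m a b ∨ prefM m b a := by
    intro m a b hne
    haveI := hM m
    rcases trichotomous_of (prefM m) a b with h | h | h
    · exact Or.inl h
    · exact absurd h hne
    · exact Or.inr h
  have trW : ∀ w (a b c : Option M), prefW w a b → prefW w b c → prefW w a c := by
    intro w a b c hab hbc
    haveI := hW w
    exact _root_.trans_of (prefW w) hab hbc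
  have irW : ∀ w (a : Option M), ¬ prefW w a a := by
    intro w a
    haveI := hW w
    exact irrefl_of (prefW w) a
  have toW : ∀ w (a b : Option M), a ≠ b → prefW w a b ∨ prefW w b a := by
    intro w a b hne
    haveI := hW w
    rcases trichotomous_of (prefW w) a b with h | h | h
    · exact Or.inl h
    · exact absurd h hne
    · exact Or.inr h
  -- induced orders on W and M
  have trM' : ∀ m (a b c : W), prefM m (some a) (some b) → prefM m (some b) (some c) →
      prefM m (some a) (some c) := fun m a b c h1 h2 => trM m _ _ _ h1 h2
  have irM' : ∀ m (a : W), ¬ prefM m (some a) (some a) := fun m a => irM m _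
  have toM' : ∀ m (a b : W), a ≠ b → prefM m (some a) (some b) ∨ prefM m (some b) (some a) :=
    fun m a b hne => toM m _ _ (by simpa using hne)
  have trW' : ∀ w (a b c : M), prefW w (some a) (some b) → prefW w (some b) (some c) →
      prefW w (some a) (some c) := fun w a b c h1 h2 => trW w _ _ _ h1 h2
  have irW' : ∀ w (a : M), ¬ prefW w (some a) (some a) := fun w a => irW w _
  have toW' : ∀ w (a b : M), a ≠ b → prefW w (some a) (some b) ∨ prefW w (some b) (some a) :=
    fun w a b hne => toW w _ _ (by simpa using hne)
  -- membership unfolding lemmas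
  have memCM : ∀ (R : Finset (M × W)) (m : M) (w : W),
      (m, w) ∈ CMX qM prefM R ↔
        w ∈ chooseTop (fun a b => prefM m (some a) (some b)) (qM m) (WsetX prefM R m) := by
    intro R m w
    simp [CMX]
  have memWset : ∀ (R : Finset (M × W)) (m : M) (w : W),
      w ∈ WsetX prefM R m ↔ prefM m (some w) none ∧ (m, w) ∉ R := by
    intro R m w
    simp [WsetX]
  have memPw : ∀ (S : Finset (M × W)) (w : W) (m : M),
      m ∈ PwX prefW S w ↔ (m, w) ∈ S ∧ prefW w (some m) none := by
    intro S w m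
    simp [PwX]
  -- L2 : proposals are never to rejecting women
  have L2 : ∀ (R : Finset (M × W)) (p : M × W), p ∈ CMX qM prefM R → p ∉ R := by
    intro R p hp
    obtain ⟨m, w⟩ := p
    rw [memCM] at hp
    exact ((memWset R m w).mp (chooseTop_subset _ _ _ hp)).2
  -- L3 : held men are matched and acceptable
  have L3 : ∀ (R : Finset (M × W)) (w : W) (m : M), m ∈ HwX qM qW prefM prefW R w →
      (m, w) ∈ muX qM qW prefM prefW R ∧ (m, w) ∈ CMX qM prefM R ∧ prefW w (some m) none := by
    intro R w m hm
    have hP := chooseTop_subset _ _ _ hm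
    rw [memPw] at hP
    exact ⟨Finset.mem_filter.mpr ⟨hP.1, hm⟩, hP.1, hP.2⟩
  -- μ ⊆ CM
  have LmuCM : ∀ (R : Finset (M × W)), muX qM qW prefM prefW R ⊆ CMX qM prefM R :=
    fun R => Finset.filter_subset _ _
  -- L4 : held men keep proposing after one round
  have L4 : ∀ (R : Finset (M × W)) (w : W) (m : M), m ∈ HwX qM qW prefM prefW R w →
      m ∈ PwX prefW (CMX qM prefM (FX qM qW prefM prefW R)) w := by
    intro R w m hm
    obtain ⟨hmu, hCM, hacc⟩ := L3 R w m hm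
    rw [memPw]
    refine ⟨?_, hacc⟩
    rw [memCM] at hCM ⊢
    have hsub : WsetX prefM (FX qM qW prefM prefW R) m ⊆ WsetX prefM R m := by
      intro w' hw'
      rw [memWset] at hw' ⊢
      exact ⟨hw'.1, fun h => hw'.2 (Finset.mem_union_left _ h)⟩
    refine chooseTop_mono hsub hCM ?_
    rw [memWset]
    have hwW := (memWset R m w).mp (chooseTop_subset _ _ _ hCM)
    refine ⟨hwW.1, ?_⟩
    intro h
    rcases Finset.mem_union.mp h with h | h
    · exact hwW.2 h
    · exact (Finset.mem_sdiff.mp h).2 hmu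
  -- L5 : invariant preservation
  have L5 : ∀ (R : Finset (M × W)), InvX qM qW prefM prefW R →
      InvX qM qW prefM prefW (FX qM qW prefM prefW R) := by
    intro R hInv p hp hacc
    -- step 1: establish the invariant statement w.r.t. R itself
    have hstar : qW p.2 ≤ (PwX prefW (CMX qM prefM R) p.2).card ∧
        ∀ m' ∈ HwX qM qW prefM prefW R p.2, prefW p.2 (some m') (some p.1) := by
      rcases Finset.mem_union.mp hp with hpR | hpD
      · exact hInv p hpR hacc
      · obtain ⟨hpCM, hpnmu⟩ := Finset.mem_sdiff.mp hpD
        have hm : p.1 ∉ HwX qM qW prefM prefW R p.2 := by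
          intro h
          exact hpnmu (Finset.mem_filter.mpr ⟨hpCM, h⟩)
        have hmP : p.1 ∈ PwX prefW (CMX qM prefM R) p.2 := by
          rw [memPw]
          exact ⟨by rwa [Prod.mk.eta], hacc⟩
        exact ⟨chooseTop_notMem_card_le hmP hm,
          chooseTop_beats (trW' p.2) (irW' p.2) (toW' p.2) hmP hm⟩
    have hHsub : HwX qM qW prefM prefW R p.2 ⊆
        PwX prefW (CMX qM prefM (FX qM qW prefM prefW R)) p.2 :=
      fun m' hm' => L4 R p.2 m' hm'
    have hHcard : (HwX qM qW prefM prefW R p.2).card = qW p.2 :=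
      chooseTop_card_eq (trW' p.2) (irW' p.2) (toW' p.2) hstar.1
    constructor
    · calc qW p.2 = (HwX qM qW prefM prefW R p.2).card := hHcard.symm
        _ ≤ _ := Finset.card_le_card hHsub
    · exact chooseTop_all_beat (trW' p.2) (irW' p.2) (toW' p.2) hHsub hHcard.ge hstar.2
  -- find a fixed point
  have key : ∀ (n : ℕ) (R : Finset (M × W)), InvX qM qW prefM prefW R →
      Fintype.card (M × W) - R.card ≤ n →
      ∃ R', InvX qM qW prefM prefW R' ∧ FX qM qW prefM prefW R' = R' := by
    intro n
    induction n with
    | zero =>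
      intro R hInv hn
      -- R = univ, so CM R proposes nothing outside R, but CM ∩ R = ∅
      refine ⟨R, hInv, ?_⟩
      have hRuniv : R = Finset.univ := by
        apply Finset.eq_univ_of_card
        have := Finset.card_le_univ R
        omega
      have : CMX qM prefM R = ∅ := by
        rw [Finset.eq_empty_iff_forall_notMem]
        intro p hp
        exact L2 R p hp (hRuniv ▸ Finset.mem_univ p)
      rw [FX, this]
      simp
    | succ n ih =>
      intro R hInv hn
      by_cases hfix : FX qM qW prefM prefW R = R
      · exact ⟨R, hInv, hfix⟩
      · have hsub : R ⊆ FX qM qW prefM prefW R := Finset.subset_union_left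
        have hlt : R.card < (FX qM qW prefM prefW R).card :=
          Finset.card_lt_card (Finset.ssubset_iff_subset_ne.mpr ⟨hsub, fun h => hfix h.symm⟩)
        have hle : (FX qM qW prefM prefW R).card ≤ Fintype.card (M × W) := by
          simpa [Finset.card_univ] using Finset.card_le_univ (FX qM qW prefM prefW R)
        exact ih (FX qM qW prefM prefW R) (L5 R hInv) (by omega)
  obtain ⟨R, hInv, hfix⟩ := key (Fintype.card (M × W)) ∅ (fun p hp => absurd hp (by simp))
    (by omega)
  -- at the fixed point, μ = CM R
  set μ := muX qM qW prefM prefW R with hμdef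
  have hμCM : μ = CMX qM prefM R := by
    refine Finset.Subset.antisymm (LmuCM R) ?_
    intro p hp
    by_contra hpn
    have hpD : p ∈ CMX qM prefM R \ μ := Finset.mem_sdiff.mpr ⟨hp, hpn⟩
    have : p ∈ R := by
      rw [← hfix]
      exact Finset.mem_union_right _ hpD
    exact L2 R p hp this
  -- structure of the fibers of μ
  have hmanEq : ∀ m : M, (μ.filter fun p => p.1 = m) =
      (chooseTop (fun a b => prefM m (some a) (some b)) (qM m) (WsetX prefM R m)).image
        (fun w => (m, w)) := by
    intro m
    ext p
    simp only [Finset.mem_filter, Finset.mem_image]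
    constructor
    · rintro ⟨hpμ, rfl⟩
      rw [hμCM] at hpμ
      obtain ⟨m', w⟩ := p
      rw [memCM] at hpμ
      exact ⟨w, hpμ, rfl⟩
    · rintro ⟨w, hw, rfl⟩
      exact ⟨by rw [hμCM]; exact (memCM R m w).mpr hw, rfl⟩
  have hwomEq : ∀ w : W, (μ.filter fun p => p.2 = w) =
      (HwX qM qW prefM prefW R w).image (fun m => (m, w)) := by
    intro w
    ext p
    simp only [Finset.mem_filter, Finset.mem_image]
    constructor
    · rintro ⟨hpμ, rfl⟩
      obtain ⟨m, w'⟩ := p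
      exact ⟨m, (Finset.mem_filter.mp hpμ).2, rfl⟩
    · rintro ⟨m, hm, rfl⟩
      exact ⟨(L3 R w m hm).1, rfl⟩
  have hmanCard : ∀ m : M, (μ.filter fun p => p.1 = m).card =
      (chooseTop (fun a b => prefM m (some a) (some b)) (qM m) (WsetX prefM R m)).card := by
    intro m
    rw [hmanEq m]
    exact Finset.card_image_of_injective _ (fun a b h => by simpa using h)
  have hwomCard : ∀ w : W, (μ.filter fun p => p.2 = w).card =
      (HwX qM qW prefM prefW R w).card := by
    intro w
    rw [hwomEq w]
    exact Finset.card_image_of_injective _ (fun a b h => by simpa using h)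
  refine ⟨μ, ?_, ?_, ?_, ?_⟩
  · intro m
    rw [hmanCard m]
    exact chooseTop_card_le (trM' m) (irM' m) (toM' m) _ _
  · intro w
    rw [hwomCard w]
    exact chooseTop_card_le (trW' w) (irW' w) (toW' w) _ _
  · intro p hpμ
    obtain ⟨m, w⟩ := p
    have h1 : (m, w) ∈ CMX qM prefM R := hμCM ▸ hpμ
    rw [memCM] at h1
    have h2 := (memWset R m w).mp (chooseTop_subset _ _ _ h1)
    have h3 := (L3 R w m (Finset.mem_filter.mp hpμ).2).2.2
    exact ⟨h2.1, h3⟩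
  · rintro ⟨m, w, hnot, hBM, hBW⟩
    -- acceptability of the blocking pair
    have hIR : ∀ p ∈ μ, prefM p.1 (some p.2) none ∧ prefW p.2 (some p.1) none := by
      intro p hpμ
      obtain ⟨m', w'⟩ := p
      have h1 : (m', w') ∈ CMX qM prefM R := hμCM ▸ hpμ
      rw [memCM] at h1
      exact ⟨((memWset R m' w').mp (chooseTop_subset _ _ _ h1)).1,
        (L3 R w' m' (Finset.mem_filter.mp hpμ).2).2.2⟩
    have haccM : prefM m (some w) none := by
      rcases hBM with ⟨w', hw'μ, hww'⟩ | ⟨-, h⟩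
      · exact trM m _ _ _ hww' (hIR (m, w') hw'μ).1
      · exact h
    have haccW : prefW w (some m) none := by
      rcases hBW with ⟨m', hm'μ, hmm'⟩ | ⟨-, h⟩
      · exact trW w _ _ _ hmm' (hIR (m', w) hm'μ).2
      · exact h
    by_cases hR : (m, w) ∈ R
    · obtain ⟨hcard, hbeat⟩ := hInv (m, w) hR haccW
      have hHcard : (HwX qM qW prefM prefW R w).card = qW w :=
        chooseTop_card_eq (trW' w) (irW' w) (toW' w) hcard
      rcases hBW with ⟨m', hm'μ, hmm'⟩ | ⟨hlt, -⟩
      · have hm'H : m' ∈ HwX qM qW prefM prefW R w :=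
          (Finset.mem_filter.mp hm'μ).2
        exact irW w (some m) (trW w _ _ _ hmm' (hbeat m' hm'H))
      · rw [hwomCard w, hHcard] at hlt
        omega
    · have hwW : w ∈ WsetX prefM R m := (memWset R m w).mpr ⟨haccM, hR⟩
      have hwnot : w ∉ chooseTop (fun a b => prefM m (some a) (some b)) (qM m)
          (WsetX prefM R m) := by
        intro h
        exact hnot (hμCM ▸ (memCM R m w).mpr h)
      have hbeats := chooseTop_beats (trM' m) (irM' m) (toM' m) hwW hwnot
      have hcardW : (chooseTop (fun a b => prefM m (some a) (some b)) (qM m)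
          (WsetX prefM R m)).card = qM m :=
        chooseTop_card_eq (trM' m) (irM' m) (toM' m) (chooseTop_notMem_card_le hwW hwnot)
      rcases hBM with ⟨w', hw'μ, hww'⟩ | ⟨hlt, -⟩
      · have hw'c : w' ∈ chooseTop (fun a b => prefM m (some a) (some b)) (qM m)
            (WsetX prefM R m) := by
          have : (m, w') ∈ CMX qM prefM R := hμCM ▸ hw'μ
          rwa [memCM] at this
        exact irM m (some w) (trM m _ _ _ hww' (hbeats w' hw'c))
      · rw [hmanCard m, hcardW] at hlt
        omega
end

section
/- In every finite polygamous (many-to-many) market with strict preferences there exists a man-optimal stable matching: a stable matching μ such that for every stable matching μ' and every man m, when the padded assignments μ(m) and μ'(m) are each listed in decreasing order of m's preference, the i-th entry of μ(m) is weakly preferred by m to the i-th entry of μ'(m) for every i ∈ {1, …, q_m}. Moreover, such a man-optimal stable matching is unique. -/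
/-- The assignment of man `m` in the matching `μ` of a polygamous market:
the multiset of his matched women (as `some w`), padded with copies of the
man himself (as `none`) up to his quota `qM m`. -/
def paddedAssignmentM {M W : Type*} [DecidableEq M]
    (μ : Finset (M × W)) (qM : M → ℕ) (m : M) : Multiset (Option W) :=
  ((μ.filter fun p => p.1 = m).val.map fun p => some p.2) +
    Multiset.replicate (qM m - (μ.filter fun p => p.1 = m).card) none

/-- A valid matching on a polygamous market: a set of man-woman pairs (so
the same pair matches at most once) respecting the quotas on both sides. -/
def PolyValid {M W : Type*} [DecidableEq M] [DecidableEq W]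
    (qM : M → ℕ) (qW : W → ℕ) (μ : Finset (M × W)) : Prop :=
  (∀ m : M, (μ.filter fun p => p.1 = m).card ≤ qM m) ∧
  (∀ w : W, (μ.filter fun p => p.2 = w).card ≤ qW w)

/-- Stability of a valid matching on a polygamous market: individual
rationality plus the absence of blocking pairs, where assignments are
padded with copies of the person up to their quota (`none` = the person
themself in the preference orders `prefM m`, `prefW w`). -/
def PolyStable {M W : Type*} [DecidableEq M] [DecidableEq W]
    (qM : M → ℕ) (qW : W → ℕ)
    (prefM : M → Option W → Option W → Prop)
    (prefW : W → Option M → Option M → Prop)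
    (μ : Finset (M × W)) : Prop :=
  (∀ p ∈ μ, prefM p.1 (some p.2) none ∧ prefW p.2 (some p.1) none) ∧
  ¬ ∃ (m : M) (w : W), (m, w) ∉ μ ∧
      ((∃ w', (m, w') ∈ μ ∧ prefM m (some w) (some w')) ∨
        ((μ.filter fun p => p.1 = m).card < qM m ∧ prefM m (some w) none)) ∧
      ((∃ m', (m', w) ∈ μ ∧ prefW w (some m) (some m')) ∨
        ((μ.filter fun p => p.2 = w).card < qW w ∧ prefW w (some m) none))

/-- `μ` dominates `μ'` from the men's point of view: for every man `m`,
when the padded assignments of `m` under `μ` and `μ'` are each listed in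
decreasing order of `m`'s preference, the `i`-th entry for `μ` is weakly
preferred by `m` to the `i`-th entry for `μ'`. -/
def MenDominate {M W : Type*} [DecidableEq M]
    (qM : M → ℕ) (prefM : M → Option W → Option W → Prop)
    (μ μ' : Finset (M × W)) : Prop :=
  ∀ (m : M) (l l' : List (Option W)),
    (l : Multiset (Option W)) = paddedAssignmentM μ qM m →
    l.Pairwise (fun a b => a = b ∨ prefM m a b) →
    (l' : Multiset (Option W)) = paddedAssignmentM μ' qM m →
    l'.Pairwise (fun a b => a = b ∨ prefM m a b) →
    ∀ (i : ℕ) (h : i < l.length) (h' : i < l'.length),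
      l.get ⟨i, h⟩ = l'.get ⟨i, h'⟩ ∨ prefM m (l.get ⟨i, h⟩) (l'.get ⟨i, h'⟩)

/-!
Men-proposing deferred acceptance. A state is the set `R` of rejected pairs. In a round every man
proposes to his `qM m` favourite acceptable women that have not rejected him, and every woman holds
her `qW w` favourite acceptable suitors and rejects the others. Rejections only accumulate, so some
state is reached in which every proposal is held; the proposals there form the matching `μ*`.

Two invariants survive every round. First, no pair of a stable matching `μ` is ever rejected: if
`w` rejects `m` with `(m, w) ∈ μ`, each of the `qW w` suitors she prefers to `m` must also be
matched to her in `μ`, since otherwise he and `w` would block `μ`, and her quota overflows.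
Second, whenever `w` rejects an acceptable `m`, at least `qW w` suitors she prefers to `m` are
proposing to her; at the final state this makes `μ*` stable. By the first invariant every woman
matched to `m` in a stable `μ` is still available to him, so for every `b` the assignment of `m`
in `μ*` has at least as many entries weakly above `b` as in `μ`, which for preference-sorted lists
is the entrywise comparison. Uniqueness then follows by antisymmetry.
-/

open Finset

namespace PolygamousMarket

open scoped Classical

section Top

variable {α : Type*} (r : α → α → Prop)

noncomputable def rank (S : Finset α) (a : α) : ℕ := #{b ∈ S | r b a}

noncomputable def top (S : Finset α) (t : ℕ) : Finset α := {a ∈ S | rank r S a < t}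

variable {r}

lemma rank_lt_rank [IsStrictOrder α r] {S : Finset α} {a b : α} (ha : a ∈ S) (hab : r a b) :
    rank r S a < rank r S b := by
  refine card_lt_card ⟨fun x hx => ?_, fun hsub => irrefl a (mem_filter.1 (hsub ?_)).2⟩
  · simp only [mem_filter] at hx ⊢
    exact ⟨hx.1, _root_.trans hx.2 hab⟩
  · exact mem_filter.2 ⟨ha, hab⟩

lemma rank_lt_card [Std.Irrefl r] {S : Finset α} {a : α} (ha : a ∈ S) : rank r S a < #S :=
  card_lt_card ⟨filter_subset _ _, fun hsub => irrefl a (mem_filter.1 (hsub ha)).2⟩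

lemma rank_mono {S T : Finset α} (h : S ⊆ T) (a : α) : rank r S a ≤ rank r T a :=
  card_le_card (filter_subset_filter _ h)

lemma mem_top {S : Finset α} {t : ℕ} {a : α} : a ∈ top r S t ↔ a ∈ S ∧ rank r S a < t :=
  mem_filter

lemma le_rank_of_notMem_top {S : Finset α} {t : ℕ} {a : α} (ha : a ∈ S)
    (h : a ∉ top r S t) : t ≤ rank r S a :=
  not_lt.1 fun hlt => h (mem_top.2 ⟨ha, hlt⟩)

lemma top_subset (S : Finset α) (t : ℕ) : top r S t ⊆ S := filter_subset _ _

lemma mem_top_of_rel [IsStrictOrder α r] {S : Finset α} {t : ℕ} {a b : α} (ha : a ∈ S)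
    (hb : b ∈ top r S t) (hab : r a b) : a ∈ top r S t :=
  mem_top.2 ⟨ha, (rank_lt_rank ha hab).trans (mem_top.1 hb).2⟩

lemma injOn_rank [IsStrictTotalOrder α r] (S : Finset α) : Set.InjOn (rank r S) S :=
  fun a ha b hb hab => by
    rcases trichotomous_of r a b with h | h | h
    · exact absurd hab (rank_lt_rank ha h).ne
    · exact h
    · exact absurd hab (rank_lt_rank hb h).ne'

lemma image_rank [IsStrictTotalOrder α r] (S : Finset α) : S.image (rank r S) = range #S := by
  refine eq_of_subset_of_card_le (fun k hk => ?_) ?_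
  · obtain ⟨a, ha, rfl⟩ := mem_image.1 hk
    exact mem_range.2 (rank_lt_card ha)
  · rw [card_range, card_image_of_injOn (injOn_rank S)]

lemma card_top [IsStrictTotalOrder α r] (S : Finset α) (t : ℕ) : #(top r S t) = min t #S := by
  have himage : (top r S t).image (rank r S) = range (min t #S) := by
    rw [top, ← filter_image (p := (· < t)), image_rank]
    ext k
    simp only [mem_filter, mem_range, lt_min_iff, and_comm]
  rw [← card_range (min t #S), ← himage,
    card_image_of_injOn ((injOn_rank S).mono (coe_subset.2 (top_subset S t)))]

lemma mem_top_of_card_top_lt [IsStrictTotalOrder α r] {S : Finset α} {t : ℕ} {a : α}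
    (ha : a ∈ S) (h : #(top r S t) < t) : a ∈ top r S t := by
  rw [card_top] at h
  exact mem_top.2 ⟨ha, (rank_lt_card ha).trans (by omega)⟩

lemma le_card_filter_top [IsStrictTotalOrder α r] {S : Finset α} {t k : ℕ} {P : α → Prop}
    (hP : ∀ a b, r a b → P b → P a) (hkt : k ≤ t) (hkS : k ≤ #{a ∈ S | P a}) :
    k ≤ #{a ∈ top r S t | P a} := by
  by_cases hall : ∀ a ∈ S, P a → a ∈ top r S t
  · exact hkS.trans (card_le_card fun a ha => by
      simp only [mem_filter] at ha ⊢
      exact ⟨hall a ha.1 ha.2, ha.2⟩)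
  push Not at hall
  obtain ⟨u, huS, hPu, hu⟩ := hall
  have htopP : ∀ a ∈ top r S t, P a := fun a ha => by
    rcases trichotomous_of r a u with h | rfl | h
    · exact hP a u h hPu
    · exact absurd ha hu
    · exact absurd (mem_top_of_rel huS ha h) hu
  rw [filter_true_of_mem htopP, card_top]
  exact le_min hkt (hkS.trans (card_le_card (filter_subset _ _)))

end Top

section SortedLists

variable {α : Type*} [Preorder α] [DecidableLE α] {l l' : List α} {i : ℕ}

lemma le_countP_le_getElem (hl : l.SortedLE) (hi : i < l.length) :
    i + 1 ≤ l.countP (fun a => a ≤ l[i]) := by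
  have htake : (l.take (i + 1)).countP (fun a => a ≤ l[i]) = i + 1 := by
    rw [List.countP_eq_length.2, List.length_take_of_le hi]
    intro a ha
    obtain ⟨j, hj, rfl⟩ := List.getElem_of_mem ha
    rw [List.getElem_take, decide_eq_true_eq]
    rw [List.length_take] at hj
    exact hl.getElem_le_getElem_of_le (by omega)
  calc i + 1 = (l.take (i + 1)).countP (fun a => a ≤ l[i]) := htake.symm
    _ ≤ l.countP (fun a => a ≤ l[i]) := (List.take_sublist _ _).countP_le

lemma getElem_le_of_le_countP (hl : l.SortedLE) (hi : i < l.length) {b : α}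
    (h : i + 1 ≤ l.countP (fun a => a ≤ b)) : l[i] ≤ b := by
  by_contra hib
  have hdrop : (l.drop i).countP (fun a => a ≤ b) = 0 := by
    rw [List.countP_eq_zero]
    intro a ha hab
    obtain ⟨j, hj, rfl⟩ := List.getElem_of_mem ha
    rw [List.getElem_drop, decide_eq_true_eq] at hab
    exact hib ((hl.getElem_le_getElem_of_le (Nat.le_add_right i j)).trans hab)
  have htake := (l.take i).countP_le_length (p := fun a => a ≤ b)
  rw [← List.take_append_drop i l, List.countP_append, hdrop] at h
  simp only [List.length_take] at htake
  omega

lemma getElem_le_getElem_of_countP_le (hl : l.SortedLE) (hl' : l'.SortedLE)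
    (hi : i < l.length) (hi' : i < l'.length)
    (h : l'.countP (fun a => a ≤ l'[i]) ≤ l.countP (fun a => a ≤ l'[i])) : l[i] ≤ l'[i] :=
  getElem_le_of_le_countP hl hi ((le_countP_le_getElem hl' hi').trans h)

end SortedLists

lemma exists_fixedPoint_of_subset {β : Type*} [Fintype β] {P : Finset β → Prop}
    {f : Finset β → Finset β} (hf : ∀ s, s ⊆ f s) (hP : ∀ s, P s → P (f s))
    {s₀ : Finset β} (h₀ : P s₀) : ∃ s, P s ∧ f s = s := by
  obtain ⟨s, hs, hmax⟩ := exists_max_image {s | P s} card ⟨s₀, by simpa using h₀⟩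
  rw [mem_filter_univ] at hs
  exact ⟨s, hs, (eq_of_subset_of_card_le (hf s) (hmax _ (by simpa using hP s hs))).symm⟩

instance {α : Type*} {r : Option α → Option α → Prop} [IsStrictTotalOrder (Option α) r] :
    IsStrictTotalOrder α (InvImage r some) where
  toTrichotomous := InvImage.trichotomous (Option.some_injective α)

section Assignments

variable {M W : Type*} [DecidableEq M] [DecidableEq W]

noncomputable def womenOf [Fintype W] (μ : Finset (M × W)) (m : M) : Finset W :=
  {w | (m, w) ∈ μ}

noncomputable def menOf [Fintype M] (μ : Finset (M × W)) (w : W) : Finset M :=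
  {m | (m, w) ∈ μ}

lemma filter_fst_eq_map [Fintype W] (μ : Finset (M × W)) (m : M) :
    {p ∈ μ | p.1 = m} = (womenOf μ m).map (Function.Embedding.sectR m W) := by
  ext ⟨a, b⟩
  simp only [mem_filter, mem_map, womenOf, mem_univ, true_and, Function.Embedding.sectR_apply,
    Prod.mk.injEq]
  constructor
  · rintro ⟨h, rfl⟩
    exact ⟨b, h, rfl, rfl⟩
  · rintro ⟨b, h, rfl, rfl⟩
    exact ⟨h, rfl⟩

lemma filter_snd_eq_map [Fintype M] (μ : Finset (M × W)) (w : W) :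
    {p ∈ μ | p.2 = w} = (menOf μ w).map (Function.Embedding.sectL M w) := by
  ext ⟨a, b⟩
  simp only [mem_filter, mem_map, menOf, mem_univ, true_and, Function.Embedding.sectL_apply,
    Prod.mk.injEq]
  constructor
  · rintro ⟨h, rfl⟩
    exact ⟨a, h, rfl, rfl⟩
  · rintro ⟨a, h, rfl, rfl⟩
    exact ⟨h, rfl⟩

lemma card_filter_fst [Fintype W] (μ : Finset (M × W)) (m : M) :
    #{p ∈ μ | p.1 = m} = #(womenOf μ m) := by
  rw [filter_fst_eq_map, card_map]

lemma card_filter_snd [Fintype M] (μ : Finset (M × W)) (w : W) :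
    #{p ∈ μ | p.2 = w} = #(menOf μ w) := by
  rw [filter_snd_eq_map, card_map]

variable [Fintype W] {qM : M → ℕ} {prefM : M → Option W → Option W → Prop}
  {μ : Finset (M × W)} {m : M}

lemma paddedAssignmentM_eq :
    paddedAssignmentM μ qM m =
      (womenOf μ m).val.map some + Multiset.replicate (qM m - #(womenOf μ m)) none := by
  rw [paddedAssignmentM, card_filter_fst, filter_fst_eq_map, map_val, Multiset.map_map]
  rfl

lemma mem_paddedAssignmentM_some {w : W} :
    some w ∈ paddedAssignmentM μ qM m ↔ (m, w) ∈ μ := by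
  simp [paddedAssignmentM_eq, womenOf, Multiset.mem_replicate]

lemma card_paddedAssignmentM (h : #{p ∈ μ | p.1 = m} ≤ qM m) :
    Multiset.card (paddedAssignmentM μ qM m) = qM m := by
  rw [card_filter_fst] at h
  simp only [paddedAssignmentM_eq, Multiset.card_add, Multiset.card_map, card_val,
    Multiset.card_replicate]
  omega

lemma countP_paddedAssignmentM {P : Option W → Prop} [DecidablePred P] (hP : ¬ P none) :
    Multiset.countP P (paddedAssignmentM μ qM m) = #{w ∈ womenOf μ m | P (some w)} := by
  rw [paddedAssignmentM_eq, Multiset.countP_add, Multiset.countP_map,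
    Multiset.countP_eq_zero.2 fun a ha => (Multiset.eq_of_mem_replicate ha) ▸ hP, add_zero]
  rfl

lemma eq_of_menDominate [∀ m, IsStrictTotalOrder (Option W) (prefM m)] {ν : Finset (M × W)}
    (hν : ∀ m, #{p ∈ ν | p.1 = m} ≤ qM m) (hμ : ∀ m, #{p ∈ μ | p.1 = m} ≤ qM m)
    (h₁ : MenDominate qM prefM ν μ) (h₂ : MenDominate qM prefM μ ν) : ν = μ := by
  have hpad : ∀ m, paddedAssignmentM ν qM m = paddedAssignmentM μ qM m := by
    intro m
    let := linearOrderOfSTO (prefM m)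
    set l := Multiset.sort (paddedAssignmentM ν qM m) (· ≤ ·)
    set l' := Multiset.sort (paddedAssignmentM μ qM m) (· ≤ ·)
    have hl : (l : Multiset (Option W)) = paddedAssignmentM ν qM m := Multiset.sort_eq _ _
    have hl' : (l' : Multiset (Option W)) = paddedAssignmentM μ qM m := Multiset.sort_eq _ _
    have hsl : l.Pairwise (· ≤ ·) := Multiset.pairwise_sort _ _
    have hsl' : l'.Pairwise (· ≤ ·) := Multiset.pairwise_sort _ _
    have hll' : l = l' :=
      List.ext_getElem (by simp [l, l', card_paddedAssignmentM, hν m, hμ m]) fun i hi hi' =>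
        le_antisymm (h₁ m l l' hl hsl hl' hsl' i hi hi') (h₂ m l' l hl' hsl' hl hsl i hi' hi)
    rw [← hl, ← hl', hll']
  ext ⟨m, w⟩
  rw [← mem_paddedAssignmentM_some (qM := qM), hpad, mem_paddedAssignmentM_some]

end Assignments

section Blocking

variable {M W : Type*} (qM : M → ℕ) (qW : W → ℕ)
  (prefM : M → Option W → Option W → Prop) (prefW : W → Option M → Option M → Prop)

def ManPrefers [DecidableEq M] (μ : Finset (M × W)) (m : M) (w : W) : Prop :=
  (∃ w', (m, w') ∈ μ ∧ prefM m (some w) (some w')) ∨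
    (#{p ∈ μ | p.1 = m} < qM m ∧ prefM m (some w) none)

def WomanPrefers [DecidableEq W] (μ : Finset (M × W)) (m : M) (w : W) : Prop :=
  (∃ m', (m', w) ∈ μ ∧ prefW w (some m) (some m')) ∨
    (#{p ∈ μ | p.2 = w} < qW w ∧ prefW w (some m) none)

variable {qM qW prefM prefW} {μ : Finset (M × W)} {m : M} {w : W}

lemma PolyStable.not_blocking [DecidableEq M] [DecidableEq W]
    (hs : PolyStable qM qW prefM prefW μ) (hnot : (m, w) ∉ μ)
    (hm : ManPrefers qM prefM μ m w) (hw : WomanPrefers qW prefW μ m w) : False :=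
  hs.2 ⟨m, w, hnot, hm, hw⟩

lemma acceptable_of_manPrefers [DecidableEq M] [IsTrans (Option W) (prefM m)]
    (hIR : ∀ w', (m, w') ∈ μ → prefM m (some w') none) (h : ManPrefers qM prefM μ m w) :
    prefM m (some w) none := by
  rcases h with ⟨w', hw', hpref⟩ | ⟨-, hacc⟩
  · exact _root_.trans hpref (hIR w' hw')
  · exact hacc

lemma acceptable_of_womanPrefers [DecidableEq W] [IsTrans (Option M) (prefW w)]
    (hIR : ∀ m', (m', w) ∈ μ → prefW w (some m') none) (h : WomanPrefers qW prefW μ m w) :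
    prefW w (some m) none := by
  rcases h with ⟨m', hm', hpref⟩ | ⟨-, hacc⟩
  · exact _root_.trans hpref (hIR m' hm')
  · exact hacc

lemma not_womanPrefers_of_le_card_filter [DecidableEq M] [DecidableEq W] [Fintype M]
    [IsStrictOrder (Option M) (prefW w)]
    (hcard : #(menOf μ w) ≤ qW w)
    (hbetter : qW w ≤ #{m' ∈ menOf μ w | prefW w (some m') (some m)}) :
    ¬ WomanPrefers qW prefW μ m w := by
  have hall : {m' ∈ menOf μ w | prefW w (some m') (some m)} = menOf μ w :=
    eq_of_subset_of_card_le (filter_subset _ _) (hcard.trans hbetter)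
  rintro (⟨m', hm', hpref⟩ | ⟨hlt, -⟩)
  · have hm'w : m' ∈ menOf μ w := by simpa [menOf] using hm'
    rw [← hall] at hm'w
    exact asymm hpref (mem_filter.1 hm'w).2
  · rw [card_filter_snd, ← hall] at hlt
    omega

end Blocking

section DeferredAcceptance

variable {M W : Type*} [DecidableEq M] [DecidableEq W] [Fintype W] (qM : M → ℕ) (qW : W → ℕ)
  (prefM : M → Option W → Option W → Prop) (prefW : W → Option M → Option M → Prop)

noncomputable def available (R : Finset (M × W)) (m : M) : Finset W :=
  {w | prefM m (some w) none ∧ (m, w) ∉ R}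

noncomputable def proposed (R : Finset (M × W)) (m : M) : Finset W :=
  top (InvImage (prefM m) some) (available prefM R m) (qM m)

def NoStablePartnerRejected (R : Finset (M × W)) : Prop :=
  ∀ μ, PolyValid qM qW μ → PolyStable qM qW prefM prefW μ → ∀ p ∈ R, p ∉ μ

variable {qM qW prefM prefW} {R μ : Finset (M × W)} {m : M} {w : W}

lemma mem_available : w ∈ available prefM R m ↔ prefM m (some w) none ∧ (m, w) ∉ R := by
  simp [available]

lemma available_anti {R' : Finset (M × W)} (h : R ⊆ R') (m : M) :
    available prefM R' m ⊆ available prefM R m := fun w hw => by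
  rw [mem_available] at hw ⊢
  exact ⟨hw.1, fun hR => hw.2 (h hR)⟩

lemma card_proposed_le [∀ m, IsStrictTotalOrder (Option W) (prefM m)] (m : M) :
    #(proposed qM prefM R m) ≤ qM m := by
  rw [proposed, card_top]
  exact min_le_left _ _

lemma womenOf_subset_available (hR : NoStablePartnerRejected qM qW prefM prefW R)
    (hv : PolyValid qM qW μ) (hs : PolyStable qM qW prefM prefW μ) (m : M) :
    womenOf μ m ⊆ available prefM R m := fun w hw => by
  have hmw : (m, w) ∈ μ := by simpa [womenOf] using hw
  exact mem_available.2 ⟨(hs.1 _ hmw).1, fun h => hR μ hv hs _ h hmw⟩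

lemma card_filter_womenOf_le_proposed [∀ m, IsStrictTotalOrder (Option W) (prefM m)]
    (hR : NoStablePartnerRejected qM qW prefM prefW R)
    (hv : PolyValid qM qW μ) (hs : PolyStable qM qW prefM prefW μ) {m : M} {P : W → Prop}
    (hP : ∀ a b, prefM m (some a) (some b) → P b → P a) :
    #{w ∈ womenOf μ m | P w} ≤ #{w ∈ proposed qM prefM R m | P w} := by
  refine le_card_filter_top hP ((card_filter_le _ _).trans ?_)
    (card_le_card (filter_subset_filter _ (womenOf_subset_available hR hv hs m)))
  rw [← card_filter_fst]
  exact hv.1 m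

variable [Fintype M] (qM qW prefM prefW)

noncomputable def proposals (R : Finset (M × W)) : Finset (M × W) :=
  {p | p.2 ∈ proposed qM prefM R p.1}

noncomputable def suitors (R : Finset (M × W)) (w : W) : Finset M :=
  {m | prefW w (some m) none ∧ (m, w) ∈ proposals qM prefM R}

noncomputable def held (R : Finset (M × W)) (w : W) : Finset M :=
  top (InvImage (prefW w) some) (suitors qM prefM prefW R w) (qW w)

noncomputable def step (R : Finset (M × W)) : Finset (M × W) :=
  R ∪ {p ∈ proposals qM prefM R | p.1 ∉ held qM qW prefM prefW R p.2}

def AllProposalsHeld (R : Finset (M × W)) : Prop :=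
  ∀ m w, (m, w) ∈ proposals qM prefM R → m ∈ held qM qW prefM prefW R w

def RejectedForBetterSuitors (R : Finset (M × W)) : Prop :=
  ∀ m w, (m, w) ∈ R → prefW w (some m) none →
    qW w ≤ rank (InvImage (prefW w) some) (suitors qM prefM prefW R w) m

variable {qM qW prefM prefW}

lemma mem_suitors : m ∈ suitors qM prefM prefW R w ↔
    prefW w (some m) none ∧ (m, w) ∈ proposals qM prefM R := by
  simp [suitors]

lemma mem_proposals : (m, w) ∈ proposals qM prefM R ↔ w ∈ proposed qM prefM R m := by
  simp [proposals]

lemma womenOf_proposals : womenOf (proposals qM prefM R) m = proposed qM prefM R m := by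
  ext w
  simp [womenOf, mem_proposals]

lemma mem_available_of_mem_proposals (h : (m, w) ∈ proposals qM prefM R) :
    w ∈ available prefM R m :=
  top_subset _ _ (mem_proposals.1 h)

lemma acceptable_of_mem_proposals (h : (m, w) ∈ proposals qM prefM R) :
    prefM m (some w) none :=
  (mem_available.1 (mem_available_of_mem_proposals h)).1

lemma notMem_of_mem_proposals (h : (m, w) ∈ proposals qM prefM R) : (m, w) ∉ R :=
  (mem_available.1 (mem_available_of_mem_proposals h)).2

lemma held_subset_suitors : held qM qW prefM prefW R w ⊆ suitors qM prefM prefW R w :=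
  top_subset _ _

lemma acceptable_of_mem_suitors (h : m ∈ suitors qM prefM prefW R w) : prefW w (some m) none :=
  (mem_suitors.1 h).1

lemma held_subset_suitors_step (w : W) :
    held qM qW prefM prefW R w ⊆ suitors qM prefM prefW (step qM qW prefM prefW R) w := by
  intro m hm
  obtain ⟨hacc, hprop⟩ := mem_suitors.1 (held_subset_suitors hm)
  obtain ⟨hw, hrank⟩ := mem_top.1 (mem_proposals.1 hprop)
  have hnew : (m, w) ∉ step qM qW prefM prefW R := by
    rintro hstep
    rcases mem_union.1 hstep with hR | hrej
    · exact (mem_available.1 hw).2 hR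
    · exact (mem_filter.1 hrej).2 hm
  refine mem_suitors.2 ⟨hacc, mem_proposals.2 (mem_top.2 ⟨?_, ?_⟩)⟩
  · exact mem_available.2 ⟨(mem_available.1 hw).1, hnew⟩
  · exact (rank_mono (available_anti subset_union_left m) w).trans_lt hrank

lemma card_held_le [∀ w, IsStrictTotalOrder (Option M) (prefW w)] (w : W) :
    #(held qM qW prefM prefW R w) ≤ qW w := by
  rw [held, card_top]
  exact min_le_left _ _

lemma manPrefers_of_mem_proposals [∀ m, IsStrictTotalOrder (Option W) (prefM m)]
    (hR : NoStablePartnerRejected qM qW prefM prefW R)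
    {μ : Finset (M × W)} (hv : PolyValid qM qW μ) (hs : PolyStable qM qW prefM prefW μ)
    {m : M} {w : W} (hp : (m, w) ∈ proposals qM prefM R) (hnot : (m, w) ∉ μ) :
    ManPrefers qM prefM μ m w := by
  by_cases hfree : #{p ∈ μ | p.1 = m} < qM m
  · exact Or.inr ⟨hfree, acceptable_of_mem_proposals hp⟩
  refine Or.inl (by_contra fun hworse => ?_)
  push Not at hworse
  have hsub : womenOf μ m ⊆ {x ∈ available prefM R m | InvImage (prefM m) some x w} :=
    fun x hx => by
      have hmx : (m, x) ∈ μ := by simpa [womenOf] using hx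
      refine mem_filter.2
        ⟨mem_available.2 ⟨(hs.1 _ hmx).1, fun hxR => hR μ hv hs _ hxR hmx⟩, ?_⟩
      rcases trichotomous_of (InvImage (prefM m) some) x w with h | rfl | h
      · exact h
      · exact absurd hmx hnot
      · exact absurd h (hworse x hmx)
  have hrank : qM m ≤ rank (InvImage (prefM m) some) (available prefM R m) w := by
    rw [card_filter_fst] at hfree
    exact (not_lt.1 hfree).trans (card_le_card hsub)
  exact (mem_top.1 (mem_proposals.1 hp)).2.not_ge hrank

lemma noStablePartnerRejected_step [∀ m, IsStrictTotalOrder (Option W) (prefM m)]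
    [∀ w, IsStrictTotalOrder (Option M) (prefW w)]
    (hR : NoStablePartnerRejected qM qW prefM prefW R) :
    NoStablePartnerRejected qM qW prefM prefW (step qM qW prefM prefW R) := by
  intro μ hv hs p hp hpμ
  rcases mem_union.1 hp with hpR | hnew
  · exact hR μ hv hs p hpR hpμ
  obtain ⟨m, w⟩ := p
  obtain ⟨hprop, hnheld⟩ := mem_filter.1 hnew
  set better := {m' ∈ suitors qM prefM prefW R w | InvImage (prefW w) some m' m}
  have hrank : qW w ≤ #better :=
    le_rank_of_notMem_top (mem_suitors.2 ⟨(hs.1 _ hpμ).2, hprop⟩) hnheld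
  have hbetter : better ⊆ menOf μ w := fun m' hm' => by
    obtain ⟨hm'suitor, hm'm⟩ := mem_filter.1 hm'
    simp only [menOf, mem_filter_univ]
    by_contra hm'μ
    exact PolyStable.not_blocking hs hm'μ
      (manPrefers_of_mem_proposals hR hv hs (mem_suitors.1 hm'suitor).2 hm'μ)
      (Or.inl ⟨m, hpμ, hm'm⟩)
  have hm : m ∉ better := fun h => irrefl _ (mem_filter.1 h).2
  have hcard := hv.2 w
  rw [card_filter_snd] at hcard
  have := card_le_card (insert_subset (by simpa [menOf] using hpμ) hbetter)
  rw [card_insert_of_notMem hm] at this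
  omega

lemma rejectedForBetterSuitors_step [∀ w, IsStrictTotalOrder (Option M) (prefW w)]
    (hR : RejectedForBetterSuitors qM qW prefM prefW R) :
    RejectedForBetterSuitors qM qW prefM prefW (step qM qW prefM prefW R) := by
  intro m w hmw hacc
  have hold : qW w ≤ rank (InvImage (prefW w) some) (suitors qM prefM prefW R w) m := by
    rcases mem_union.1 hmw with hR' | hrej
    · exact hR m w hR' hacc
    · obtain ⟨hprop, hnheld⟩ := mem_filter.1 hrej
      exact le_rank_of_notMem_top (mem_suitors.2 ⟨hacc, hprop⟩) hnheld
  calc qW w ≤ #{m' ∈ held qM qW prefM prefW R w | InvImage (prefW w) some m' m} :=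
        le_card_filter_top (fun _ _ hab hb => _root_.trans hab hb) le_rfl hold
    _ ≤ _ := card_le_card (filter_subset_filter _ (held_subset_suitors_step w))

variable (qM qW prefM prefW) in
lemma exists_rejections_allProposalsHeld [∀ m, IsStrictTotalOrder (Option W) (prefM m)]
    [∀ w, IsStrictTotalOrder (Option M) (prefW w)] :
    ∃ R, NoStablePartnerRejected qM qW prefM prefW R ∧
      RejectedForBetterSuitors qM qW prefM prefW R ∧ AllProposalsHeld qM qW prefM prefW R := by
  obtain ⟨R, ⟨h₁, h₂⟩, hfix⟩ := exists_fixedPoint_of_subset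
    (P := fun R => NoStablePartnerRejected qM qW prefM prefW R ∧
      RejectedForBetterSuitors qM qW prefM prefW R)
    (fun _ => subset_union_left)
    (fun _ hR => ⟨noStablePartnerRejected_step hR.1, rejectedForBetterSuitors_step hR.2⟩)
    (s₀ := ∅) ⟨fun _ _ _ p hp => absurd hp (notMem_empty p),
      fun _ _ h => absurd h (notMem_empty _)⟩
  refine ⟨R, h₁, h₂, fun m w hp => by_contra fun hm => notMem_of_mem_proposals hp ?_⟩
  rw [← hfix]
  exact mem_union_right _ (mem_filter.2 ⟨hp, hm⟩)

lemma menOf_proposals_eq_suitors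
    (hheld : AllProposalsHeld qM qW prefM prefW R) (w : W) :
    menOf (proposals qM prefM R) w = suitors qM prefM prefW R w := by
  ext m
  simp only [menOf, mem_filter_univ]
  exact ⟨fun h => held_subset_suitors (hheld m w h), fun h => (mem_suitors.1 h).2⟩

lemma polyValid_proposals [∀ m, IsStrictTotalOrder (Option W) (prefM m)]
    [∀ w, IsStrictTotalOrder (Option M) (prefW w)]
    (hheld : AllProposalsHeld qM qW prefM prefW R) :
    PolyValid qM qW (proposals qM prefM R) := by
  refine ⟨fun m => ?_, fun w => ?_⟩
  · rw [card_filter_fst, womenOf_proposals]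
    exact card_proposed_le m
  · rw [card_filter_snd]
    exact (card_le_card fun m hm => hheld m w (by simpa [menOf] using hm)).trans (card_held_le w)

lemma mem_proposals_of_manPrefers [∀ m, IsStrictTotalOrder (Option W) (prefM m)]
    (hR : (m, w) ∉ R) (h : ManPrefers qM prefM (proposals qM prefM R) m w) :
    (m, w) ∈ proposals qM prefM R := by
  have hw : w ∈ available prefM R m :=
    mem_available.2 ⟨acceptable_of_manPrefers (fun _ => acceptable_of_mem_proposals) h, hR⟩
  rw [mem_proposals]
  rcases h with ⟨w', hw', hpref⟩ | ⟨hfree, -⟩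
  · exact mem_top_of_rel hw (mem_proposals.1 hw') hpref
  · rw [card_filter_fst, womenOf_proposals] at hfree
    exact mem_top_of_card_top_lt hw hfree

lemma polyStable_proposals [∀ m, IsStrictTotalOrder (Option W) (prefM m)]
    [∀ w, IsStrictTotalOrder (Option M) (prefW w)]
    (hR : RejectedForBetterSuitors qM qW prefM prefW R)
    (hheld : AllProposalsHeld qM qW prefM prefW R) :
    PolyStable qM qW prefM prefW (proposals qM prefM R) := by
  have hIR : ∀ m w, (m, w) ∈ proposals qM prefM R → prefW w (some m) none :=
    fun m w hp => acceptable_of_mem_suitors (held_subset_suitors (hheld m w hp))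
  refine ⟨fun p hp => ⟨acceptable_of_mem_proposals hp, hIR _ _ hp⟩, ?_⟩
  rintro ⟨m, w, hnot, hman, hwoman⟩
  have hmR : (m, w) ∈ R := by_contra fun hmR => hnot (mem_proposals_of_manPrefers hmR hman)
  have hcard := (polyValid_proposals hheld).2 w
  rw [card_filter_snd] at hcard
  refine not_womanPrefers_of_le_card_filter hcard ?_ hwoman
  rw [menOf_proposals_eq_suitors hheld]
  exact hR m w hmR (acceptable_of_womanPrefers (fun m' => hIR m' w) hwoman)

lemma countP_paddedAssignmentM_le_proposals [∀ m, IsStrictTotalOrder (Option W) (prefM m)]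
    (hR : NoStablePartnerRejected qM qW prefM prefW R)
    (hv : PolyValid qM qW μ) (hs : PolyStable qM qW prefM prefW μ) (m : M) (b : Option W) :
    Multiset.countP (fun a => a = b ∨ prefM m a b) (paddedAssignmentM μ qM m) ≤
      Multiset.countP (fun a => a = b ∨ prefM m a b)
        (paddedAssignmentM (proposals qM prefM R) qM m) := by
  by_cases hb : none = b ∨ prefM m none b
  · have hall : Multiset.countP (fun a => a = b ∨ prefM m a b)
        (paddedAssignmentM (proposals qM prefM R) qM m) = qM m := by
      rw [Multiset.countP_eq_card.2, card_paddedAssignmentM]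
      · rw [card_filter_fst, womenOf_proposals]
        exact card_proposed_le m
      · rintro (_ | w) hw
        · exact hb
        · have hacc := acceptable_of_mem_proposals (mem_paddedAssignmentM_some.1 hw)
          rcases hb with rfl | hb
          · exact Or.inr hacc
          · exact Or.inr (_root_.trans hacc hb)
    rw [hall, ← card_paddedAssignmentM (hv.1 m)]
    exact Multiset.countP_le_card _ _
  · rw [countP_paddedAssignmentM hb, countP_paddedAssignmentM hb, womenOf_proposals]
    convert card_filter_womenOf_le_proposed (P := fun w => some w = b ∨ prefM m (some w) b)
      hR hv hs fun a c hac hc => Or.inr (hc.elim (fun hcb => hcb ▸ hac) (_root_.trans hac))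

lemma menDominate_proposals [∀ m, IsStrictTotalOrder (Option W) (prefM m)]
    (hR : NoStablePartnerRejected qM qW prefM prefW R)
    (hv : PolyValid qM qW μ) (hs : PolyStable qM qW prefM prefW μ) :
    MenDominate qM prefM (proposals qM prefM R) μ := by
  intro m l l' hl hsl hl' hsl' i hi hi'
  -- its `≤` is `a = b ∨ prefM m a b`, the order of the lists in `MenDominate`
  let := linearOrderOfSTO (prefM m)
  refine getElem_le_getElem_of_countP_le hsl.sortedLE hsl'.sortedLE hi hi' ?_
  rw [← Multiset.coe_countP, ← Multiset.coe_countP, hl, hl']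
  convert countP_paddedAssignmentM_le_proposals hR hv hs m l'[i] using 3 <;> exact Iff.rfl

end DeferredAcceptance

end PolygamousMarket

open PolygamousMarket in
theorem polygamous_man_optimal_exists_unique_general
    {M W : Type*} [Fintype M] [Fintype W] [DecidableEq M] [DecidableEq W]
    (qM : M → ℕ) (qW : W → ℕ)
    (prefM : M → Option W → Option W → Prop)
    (prefW : W → Option M → Option M → Prop)
    (hM : ∀ m, IsStrictTotalOrder (Option W) (prefM m))
    (hW : ∀ w, IsStrictTotalOrder (Option M) (prefW w)) :
    ∃ μ : Finset (M × W),
      -- μ is a valid stable matching that dominates every stable matching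
      (PolyValid qM qW μ ∧ PolyStable qM qW prefM prefW μ ∧
        ∀ μ' : Finset (M × W),
          PolyValid qM qW μ' → PolyStable qM qW prefM prefW μ' →
          MenDominate qM prefM μ μ') ∧
      -- and it is the unique such matching
      (∀ ν : Finset (M × W),
        (PolyValid qM qW ν ∧ PolyStable qM qW prefM prefW ν ∧
          ∀ μ' : Finset (M × W),
            PolyValid qM qW μ' → PolyStable qM qW prefM prefW μ' →
            MenDominate qM prefM ν μ') →
        ν = μ) := by
  obtain ⟨R, hsound, hbetter, hheld⟩ := exists_rejections_allProposalsHeld qM qW prefM prefW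
  have hvalid := polyValid_proposals hheld
  have hstable := polyStable_proposals hbetter hheld
  refine ⟨proposals qM prefM R,
    ⟨hvalid, hstable, fun μ hv hs => menDominate_proposals hsound hv hs⟩, ?_⟩
  rintro ν ⟨hνv, hνs, hνdom⟩
  exact eq_of_menDominate hνv.1 hvalid.1 (hνdom _ hvalid hstable)
    (menDominate_proposals hsound hνv hνs)

theorem polygamous_man_optimal_exists_unique
    {M W : Type*} [Fintype M] [Fintype W] [DecidableEq M] [DecidableEq W]
    (qM : M → ℕ) (qW : W → ℕ) (hqM : ∀ m, 1 ≤ qM m) (hqW : ∀ w, 1 ≤ qW w)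
    (prefM : M → Option W → Option W → Prop)
    (prefW : W → Option M → Option M → Prop)
    (hM : ∀ m, IsStrictTotalOrder (Option W) (prefM m))
    (hW : ∀ w, IsStrictTotalOrder (Option M) (prefW w)) :
    ∃ μ : Finset (M × W),
      -- μ is a valid stable matching that dominates every stable matching
      (PolyValid qM qW μ ∧ PolyStable qM qW prefM prefW μ ∧
        ∀ μ' : Finset (M × W),
          PolyValid qM qW μ' → PolyStable qM qW prefM prefW μ' →
          MenDominate qM prefM μ μ') ∧
      -- and it is the unique such matching
      (∀ ν : Finset (M × W),
        (PolyValid qM qW ν ∧ PolyStable qM qW prefM prefW ν ∧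
          ∀ μ' : Finset (M × W),
            PolyValid qM qW μ' → PolyStable qM qW prefM prefW μ' →
            MenDominate qM prefM ν μ') →
        ν = μ) :=
  polygamous_man_optimal_exists_unique_general qM qW prefM prefW hM hW
end

section
/- In a finite polygamous (many-to-many) market with strict preferences, the man-optimal stable matching is woman-pessimal: if μ is a stable matching such that for every stable matching μ' and every man m the i-th best entry of the padded assignment μ(m) is weakly preferred by m to the i-th best entry of μ'(m) for all i ≤ q_m, then for every stable matching μ' and every woman w, the i-th best entry of μ'(w) is weakly preferred by w to the i-th best entry of μ(w) for all i ∈ {1, …, q_w}. -/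
/-- The assignment of woman `w` in the matching `μ`, padded with copies of
the woman herself (as `none`) up to her quota `qW w`. -/
def paddedAssignmentW {M W : Type*} [DecidableEq W]
    (μ : Finset (M × W)) (qW : W → ℕ) (w : W) : Multiset (Option M) :=
  ((μ.filter fun p => p.2 = w).val.map fun p => some p.1) +
    Multiset.replicate (qW w - (μ.filter fun p => p.2 = w).card) none

/-!
Suppose woman `w` strictly prefers the `i`-th entry `t` of her assignment in the man-optimal `μ`
to the `i`-th entry `s` of her assignment in a stable `μ'`. At least `i + 1` entries of `μ(w)`
are weakly above `t`, but at most `i` entries of `μ'(w)` are, so some `x` above `s` lies in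
`μ(w)` but not in `μ'(w)`. Since `s` is weakly above `w` herself (individual rationality of `μ'`),
`x` is a man `m` with `(m, w) ∈ μ \ μ'`. By man-optimality, the entry of `μ'(m)` at the rank
of `w` in `μ(m)` is weakly worse than `w` for `m`, and it is not `w`; so `(m, w)` blocks `μ'`.
-/

section PaddedAssignment

variable {M W : Type*} {μ : Finset (M × W)}

theorem some_mem_paddedAssignmentM [DecidableEq M] {qM : M → ℕ} {m : M} {w : W} :
    some w ∈ paddedAssignmentM μ qM m ↔ (m, w) ∈ μ := by
  simp [paddedAssignmentM, Multiset.mem_replicate]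

theorem card_lt_of_none_mem_paddedAssignmentM [DecidableEq M] {qM : M → ℕ} {m : M}
    (h : none ∈ paddedAssignmentM μ qM m) : (μ.filter fun p => p.1 = m).card < qM m := by
  simp only [paddedAssignmentM, Multiset.mem_add, Multiset.mem_map, Multiset.mem_replicate] at h
  grind

theorem card_paddedAssignmentM [DecidableEq M] {qM : M → ℕ} {m : M}
    (h : (μ.filter fun p => p.1 = m).card ≤ qM m) :
    Multiset.card (paddedAssignmentM μ qM m) = qM m := by
  simp only [paddedAssignmentM, Multiset.card_add, Multiset.card_map, Multiset.card_replicate,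
    Finset.card_val]
  omega

theorem count_some_paddedAssignmentW [DecidableEq M] [DecidableEq W] {qW : W → ℕ} {w : W}
    (m : M) : (paddedAssignmentW μ qW w).count (some m) = if (m, w) ∈ μ then 1 else 0 := by
  simp only [paddedAssignmentW, Finset.filter_val, Multiset.count_add, Multiset.count_map,
    Option.some.injEq, Multiset.filter_filter, Multiset.count_replicate, reduceCtorEq,
    ↓reduceIte, add_zero]
  rw [← Finset.filter_val, Finset.card_val,
    Finset.filter_congr (q := (· = (m, w))) (by grind), Finset.filter_eq']
  split_ifs <;> rfl

theorem some_mem_paddedAssignmentW [DecidableEq W] {qW : W → ℕ} {w : W} {m : M} :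
    some m ∈ paddedAssignmentW μ qW w ↔ (m, w) ∈ μ := by
  simp [paddedAssignmentW, Multiset.mem_replicate]

theorem card_lt_of_none_mem_paddedAssignmentW [DecidableEq W] {qW : W → ℕ} {w : W}
    (h : none ∈ paddedAssignmentW μ qW w) : (μ.filter fun p => p.2 = w).card < qW w := by
  simp only [paddedAssignmentW, Multiset.mem_add, Multiset.mem_map, Multiset.mem_replicate] at h
  grind

end PaddedAssignment

namespace List

variable {α : Type*} {r : α → α → Prop} [IsStrictOrder α r]

theorem exists_count_lt_of_rel_getElem [DecidableEq α] {l l' : List α}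
    (hl : l.Pairwise fun a b => a = b ∨ r a b) (hl' : l'.Pairwise fun a b => a = b ∨ r a b)
    {i : ℕ} (hi : i < l.length) (hi' : i < l'.length) (hlt : r l'[i] l[i]) :
    ∃ x, r x l[i] ∧ l.count x < l'.count x := by
  classical
  let p : α → Bool := fun x => decide (x = l'[i] ∨ r x l'[i])
  have above : ∀ x, p x → r x l[i] := by
    intro x hx
    rcases of_decide_eq_true hx with rfl | hx
    exacts [hlt, _root_.trans hx hlt]
  have top_of_l' : i + 1 ≤ l'.countP p := calc
    i + 1 = (l'.take (i + 1)).countP p := by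
      rw [countP_eq_length.2, length_take]
      · omega
      intro a ha
      obtain ⟨j, hj, rfl⟩ := mem_iff_getElem.1 ha
      rw [length_take] at hj
      rw [getElem_take]
      refine decide_eq_true ?_
      rcases (by omega : j < i ∨ j = i) with hji | rfl
      · exact pairwise_iff_getElem.1 hl' _ _ _ _ hji
      · exact Or.inl rfl
    _ ≤ l'.countP p := (take_sublist _ _).countP_le
  have bottom_of_l : l.countP p ≤ i := calc
    l.countP p = (l.take i).countP p + (l.drop i).countP p := by
      rw [← countP_append, take_append_drop]
    _ ≤ i + 0 := by
      refine add_le_add (countP_le_length.trans (length_take_le _ _)) (countP_eq_zero.2 ?_).le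
      intro a ha hpa
      obtain ⟨j, hj, rfl⟩ := mem_iff_getElem.1 ha
      rw [getElem_drop] at hpa
      rw [length_drop] at hj
      have hbelow : l[i] = l[i + j] ∨ r l[i] l[i + j] := by
        rcases Nat.eq_zero_or_pos j with rfl | hj0
        · exact Or.inl rfl
        · exact pairwise_iff_getElem.1 hl _ _ _ _ (by omega)
      rcases hbelow with heq | hr
      · exact irrefl _ (heq ▸ above _ hpa)
      · exact irrefl _ (_root_.trans hr (above _ hpa))
  by_contra! hle
  have hsub : l'.filter p <+~ l.filter p := subperm_ext_iff.2 fun x hx => by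
    have hpx := (mem_filter.1 hx).2
    rw [count_filter hpx, count_filter hpx]
    exact hle x (above x hpx)
  have := hsub.length_le
  rw [← countP_eq_length_filter, ← countP_eq_length_filter] at this
  omega

end List

section Stability

variable {M W : Type*} [DecidableEq M] [DecidableEq W] {qM : M → ℕ} {qW : W → ℕ}
  {prefM : M → Option W → Option W → Prop} {prefW : W → Option M → Option M → Prop}
  {μ : Finset (M × W)} {m : M} {w : W}

theorem PolyStable.false_of_blocking (hμ : PolyStable qM qW prefM prefW μ) (hmw : (m, w) ∉ μ)
    {x : Option W} (hx : x ∈ paddedAssignmentM μ qM m) (hwx : prefM m (some w) x)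
    {y : Option M} (hy : y ∈ paddedAssignmentW μ qW w) (hmy : prefW w (some m) y) : False := by
  refine hμ.2 ⟨m, w, hmw, ?_, ?_⟩
  · cases x with
    | none => exact Or.inr ⟨card_lt_of_none_mem_paddedAssignmentM hx, hwx⟩
    | some w' => exact Or.inl ⟨w', some_mem_paddedAssignmentM.1 hx, hwx⟩
  · cases y with
    | none => exact Or.inr ⟨card_lt_of_none_mem_paddedAssignmentW hy, hmy⟩
    | some m' => exact Or.inl ⟨m', some_mem_paddedAssignmentW.1 hy, hmy⟩

theorem PolyStable.not_prefW_none_of_mem [IsStrictOrder (Option M) (prefW w)]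
    (hμ : PolyStable qM qW prefM prefW μ) {y : Option M} (hy : y ∈ paddedAssignmentW μ qW w) :
    ¬ prefW w none y := by
  cases y with
  | none => exact irrefl _
  | some m => exact asymm (hμ.1 _ (some_mem_paddedAssignmentW.1 hy)).2

end Stability

theorem MenDominate.exists_mem_paddedAssignmentM_weakly_worse {M W : Type*} [DecidableEq M] {qM : M → ℕ}
    {prefM : M → Option W → Option W → Prop} {μ μ' : Finset (M × W)}
    (hdom : MenDominate qM prefM μ μ') {m : M} [IsStrictTotalOrder (Option W) (prefM m)]
    (hμ : (μ.filter fun p => p.1 = m).card ≤ qM m) (hμ' : (μ'.filter fun p => p.1 = m).card ≤ qM m)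
    {w : W} (hmw : (m, w) ∈ μ) :
    ∃ y ∈ paddedAssignmentM μ' qM m, some w = y ∨ prefM m (some w) y := by
  classical
  let := linearOrderOfSTO (prefM m)
  set l := (paddedAssignmentM μ qM m).sort
  set l' := (paddedAssignmentM μ' qM m).sort
  have hlen : l.length = l'.length := by
    simp only [l, l', Multiset.length_sort, card_paddedAssignmentM hμ, card_paddedAssignmentM hμ']
  have hwl : some w ∈ l := (Multiset.mem_sort (· ≤ ·)).2 (some_mem_paddedAssignmentM.2 hmw)
  obtain ⟨n, hn, hnw⟩ := List.mem_iff_getElem.1 hwl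
  refine ⟨l'[n], (Multiset.mem_sort (· ≤ ·)).1 (List.getElem_mem _), ?_⟩
  have := hdom m l l' (Multiset.sort_eq _ (· ≤ ·)) (Multiset.pairwise_sort _ (· ≤ ·))
    (Multiset.sort_eq _ (· ≤ ·)) (Multiset.pairwise_sort _ (· ≤ ·)) n hn (hlen ▸ hn)
  simpa [hnw] using this

theorem polygamous_man_optimal_is_woman_pessimal_general
    {M W : Type*} [DecidableEq M] [DecidableEq W]
    (qM : M → ℕ) (qW : W → ℕ)
    (prefM : M → Option W → Option W → Prop)
    (prefW : W → Option M → Option M → Prop)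
    (hM : ∀ m, IsStrictTotalOrder (Option W) (prefM m))
    (hW : ∀ w, IsStrictTotalOrder (Option M) (prefW w))
    (μ : Finset (M × W))
    (hval : PolyValid qM qW μ)
    -- man-optimality of μ
    (hopt : ∀ μ' : Finset (M × W),
      PolyValid qM qW μ' → PolyStable qM qW prefM prefW μ' →
      MenDominate qM prefM μ μ') :
    -- woman-pessimality of μ
    ∀ μ' : Finset (M × W),
      PolyValid qM qW μ' → PolyStable qM qW prefM prefW μ' →
      ∀ (w : W) (l l' : List (Option M)),
        (l : Multiset (Option M)) = paddedAssignmentW μ' qW w →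
        l.Pairwise (fun a b => a = b ∨ prefW w a b) →
        (l' : Multiset (Option M)) = paddedAssignmentW μ qW w →
        l'.Pairwise (fun a b => a = b ∨ prefW w a b) →
        ∀ (i : ℕ) (h : i < l.length) (h' : i < l'.length),
          l.get ⟨i, h⟩ = l'.get ⟨i, h'⟩ ∨ prefW w (l.get ⟨i, h⟩) (l'.get ⟨i, h'⟩) := by
  intro μ' hval' hstab' w l l' hl hl_sorted hl' hl'_sorted i hi hi'
  simp only [List.get_eq_getElem]
  by_contra! hge
  have hlt : prefW w l'[i] l[i] :=
    ((trichotomous_of (prefW w) l[i] l'[i]).resolve_left hge.2).resolve_left hge.1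
  obtain ⟨x, hx, hcount⟩ := List.exists_count_lt_of_rel_getElem hl_sorted hl'_sorted hi hi' hlt
  have hli : l[i] ∈ paddedAssignmentW μ' qW w := hl ▸ Multiset.mem_coe.2 (List.getElem_mem hi)
  obtain ⟨m, rfl⟩ : ∃ m, x = some m :=
    Option.ne_none_iff_exists'.1 (by rintro rfl; exact hstab'.not_prefW_none_of_mem hli hx)
  rw [← Multiset.coe_count, ← Multiset.coe_count, hl, hl', count_some_paddedAssignmentW,
    count_some_paddedAssignmentW] at hcount
  obtain ⟨hmw, hmw'⟩ : (m, w) ∈ μ ∧ (m, w) ∉ μ' := by split_ifs at hcount <;> simp_all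
  obtain ⟨y, hy, hwy⟩ :=
    (hopt μ' hval' hstab').exists_mem_paddedAssignmentM_weakly_worse (hval.1 m) (hval'.1 m) hmw
  rcases hwy with rfl | hwy
  · exact hmw' (some_mem_paddedAssignmentM.1 hy)
  · exact hstab'.false_of_blocking hmw' hy hwy hli hx

theorem polygamous_man_optimal_is_woman_pessimal
    {M W : Type*} [Fintype M] [Fintype W] [DecidableEq M] [DecidableEq W]
    (qM : M → ℕ) (qW : W → ℕ) (hqM : ∀ m, 1 ≤ qM m) (hqW : ∀ w, 1 ≤ qW w)
    (prefM : M → Option W → Option W → Prop)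
    (prefW : W → Option M → Option M → Prop)
    (hM : ∀ m, IsStrictTotalOrder (Option W) (prefM m))
    (hW : ∀ w, IsStrictTotalOrder (Option M) (prefW w))
    (μ : Finset (M × W))
    (hval : PolyValid qM qW μ)
    (hstab : PolyStable qM qW prefM prefW μ)
    -- man-optimality of μ
    (hopt : ∀ μ' : Finset (M × W),
      PolyValid qM qW μ' → PolyStable qM qW prefM prefW μ' →
      MenDominate qM prefM μ μ') :
    -- woman-pessimality of μ
    ∀ μ' : Finset (M × W),
      PolyValid qM qW μ' → PolyStable qM qW prefM prefW μ' →
      ∀ (w : W) (l l' : List (Option M)),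
        (l : Multiset (Option M)) = paddedAssignmentW μ' qW w →
        l.Pairwise (fun a b => a = b ∨ prefW w a b) →
        (l' : Multiset (Option M)) = paddedAssignmentW μ qW w →
        l'.Pairwise (fun a b => a = b ∨ prefW w a b) →
        ∀ (i : ℕ) (h : i < l.length) (h' : i < l'.length),
          l.get ⟨i, h⟩ = l'.get ⟨i, h'⟩ ∨ prefW w (l.get ⟨i, h⟩) (l'.get ⟨i, h'⟩) :=
  polygamous_man_optimal_is_woman_pessimal_general qM qW prefM prefW hM hW μ hval hopt
end
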